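/- arXiv:2205.01910 — 2 statements merged into one kernel-verified Lean document; each statement's English description precedes it below -/
import Mathlib

section
/- Let s, k be nonnegative integers, λ ∈ [0,1], δ, δ' ∈ ℝ, and T > 0. If u ∈ C^{k,s(s,λ,δ)}_T and v ∈ C^{k,s(s,λ,δ')}_T, then the pointwise product uv belongs to C^{k,s(s,λ,δ+δ')}_T and ‖uv‖_{C^{k,s(s,λ,δ+δ')}_T} ≤ c · ‖u‖_{C^{k,s(s,λ,δ)}_T} · ‖v‖_{C^{k,s(s,λ,δ')}_T}, with a constant c > 0 independent of u and v. -/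
open scoped BigOperators ENNReal Classical
open Filter MeasureTheory

noncomputable section

namespace NSdeRham

/-- Euclidean space `ℝⁿ`. -/
abbrev Spc (n : ℕ) := EuclideanSpace ℝ (Fin n)

variable {n : ℕ}

/-- The weight `w(x) = √(1+|x|²)`. -/
def wt (x : Spc n) : ℝ := Real.sqrt (1 + ‖x‖ ^ 2)

/-- `w(x,y) = max (w x) (w y)`. -/
def wt2 (x y : Spc n) : ℝ := max (wt x) (wt y)

/-- Partial derivative in the `i`-th coordinate direction. -/
def pd (i : Fin n) (f : Spc n → ℝ) (x : Spc n) : ℝ :=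
  fderiv ℝ f x (EuclideanSpace.single i 1)

/-- The Laplace operator `Δ = ∑ ∂²/∂xᵢ²`. -/
def lap (f : Spc n → ℝ) (x : Spc n) : ℝ := ∑ i : Fin n, pd i (pd i f) x

section enorms

variable {F : Type*} [NormedAddCommGroup F]

/-- Weighted sup-"norm" `sup_x w(x)^δ ‖g x‖` (with values in `ℝ≥0∞`). -/
def eWSup (δ : ℝ) (g : Spc n → F) : ℝ≥0∞ :=
  ⨆ x : Spc n, ENNReal.ofReal (wt x ^ δ * ‖g x‖)

/-- Weighted Hölder seminorm `⟨g⟩_{λ,δ}`. -/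
def eWHold (lam δ : ℝ) (g : Spc n → F) : ℝ≥0∞ :=
  ⨆ (x : Spc n) (y : Spc n) (_ : x ≠ y ∧ ‖x - y‖ ≤ ‖x‖ / 2),
    ENNReal.ofReal (wt2 x y ^ (δ + lam) * ‖g x - g y‖ / ‖x - y‖ ^ lam)

/-- The ordinary Hölder norm on the (closed) unit ball around the origin. -/
def eOHold (lam : ℝ) (g : Spc n → F) : ℝ≥0∞ :=
  (⨆ (x : Spc n) (_ : ‖x‖ ≤ 1), ENNReal.ofReal ‖g x‖) +
    ⨆ (x : Spc n) (y : Spc n) (_ : ‖x‖ ≤ 1 ∧ ‖y‖ ≤ 1 ∧ x ≠ y),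
      ENNReal.ofReal (‖g x - g y‖ / ‖x - y‖ ^ lam)

/-- The norm of `C^{0,λ,δ}`; for `λ = 0` this is just the weighted sup-norm. -/
def eHol0 (lam δ : ℝ) (g : Spc n → F) : ℝ≥0∞ :=
  if lam = 0 then eWSup δ g else eOHold lam g + eWSup δ g + eWHold lam δ g

/-- The norm of the base anisotropic space `C^{𝐬(0,λ,δ)}_T`. -/
def eAniso0 (T lam δ : ℝ) (v : ℝ → Spc n → F) : ℝ≥0∞ :=
  (⨆ t : Set.Icc (0 : ℝ) T, eHol0 lam δ (v t)) +
    if lam = 0 then 0 else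
      ⨆ (t₁ : Set.Icc (0 : ℝ) T) (t₂ : Set.Icc (0 : ℝ) T) (_ : (t₁ : ℝ) ≠ (t₂ : ℝ))
        (x : Spc n),
        ENNReal.ofReal (wt x ^ δ * ‖v t₁ x - v t₂ x‖ / |(t₁ : ℝ) - (t₂ : ℝ)| ^ (lam / 2))

end enorms

/-- The norm of the static weighted Hölder space `C^{s,λ,δ}`. -/
def eHolS (s : ℕ) (lam δ : ℝ) (g : Spc n → ℝ) : ℝ≥0∞ :=
  ∑ m ∈ Finset.range (s + 1), eHol0 lam (δ + m) (iteratedFDeriv ℝ m g)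

/-- Membership in the static weighted Hölder space `C^{s,λ,δ}`. -/
def HolSMem (s : ℕ) (lam δ : ℝ) (g : Spc n → ℝ) : Prop :=
  ContDiff ℝ s g ∧ eHolS s lam δ g ≠ ⊤

/-- Time derivative of order `j` (within `[0,T]`). -/
def tDeriv (T : ℝ) (j : ℕ) (u : ℝ → Spc n → ℝ) (t : ℝ) (x : Spc n) : ℝ :=
  iteratedDerivWithin j (fun τ => u τ x) (Set.Icc 0 T) t

/-- Mixed derivative `∂_x^m ∂_t^j`. -/
def mixDeriv (T : ℝ) (m j : ℕ) (u : ℝ → Spc n → ℝ) (t : ℝ) :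
    Spc n → ContinuousMultilinearMap ℝ (fun _ : Fin m => Spc n) ℝ :=
  iteratedFDeriv ℝ m (fun x => tDeriv T j u t x)

/-- The norm of the anisotropic weighted parabolic Hölder space `C^{k,𝐬(s,λ,δ)}_T`. -/
def eAnisoKS (T : ℝ) (k s : ℕ) (lam δ : ℝ) (u : ℝ → Spc n → ℝ) : ℝ≥0∞ :=
  ∑ b ∈ Finset.range (k + 1), ∑ m ∈ Finset.range (2 * s + 1), ∑ j ∈ Finset.range (s + 1),
    if m + 2 * j ≤ 2 * s then eAniso0 T lam (δ + b + m) (mixDeriv T (b + m) j u) else 0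

/-- Regularity required of members of `C^{k,𝐬(s,λ,δ)}_T`. -/
def AnisoReg (T : ℝ) (k s : ℕ) (u : ℝ → Spc n → ℝ) : Prop :=
  (∀ x : Spc n, ContDiffOn ℝ s (fun t => u t x) (Set.Icc 0 T)) ∧
  (∀ j : ℕ, j ≤ s → ∀ t ∈ Set.Icc (0 : ℝ) T,
    ContDiff ℝ (2 * (s - j) + k) (fun x => tDeriv T j u t x)) ∧
  (∀ j m : ℕ, j ≤ s → m + 2 * j ≤ 2 * s + k →
    Continuous fun p : Set.Icc (0 : ℝ) T × Spc n => mixDeriv T m j u p.1 p.2)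

/-- Membership in `C^{k,𝐬(s,λ,δ)}_T`. -/
def AnisoMem (T : ℝ) (k s : ℕ) (lam δ : ℝ) (u : ℝ → Spc n → ℝ) : Prop :=
  AnisoReg T k s u ∧ eAnisoKS T k s lam δ u ≠ ⊤

/-- The norm of `𝓕^{k,𝐬(s,λ,λ',δ)}_T = C^{k+1,𝐬(s,λ,δ)}_T ∩ C^{k,𝐬(s,λ',δ)}_T`. -/
def eFn (T : ℝ) (k s : ℕ) (lam lam' δ : ℝ) (u : ℝ → Spc n → ℝ) : ℝ≥0∞ :=
  eAnisoKS T (k + 1) s lam δ u + eAnisoKS T k s lam' δ u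

/-- Membership in `𝓕^{k,𝐬(s,λ,λ',δ)}_T`. -/
def FMem (T : ℝ) (k s : ℕ) (lam lam' δ : ℝ) (u : ℝ → Spc n → ℝ) : Prop :=
  AnisoReg T (k + 1) s u ∧ eFn T k s lam lam' δ u ≠ ⊤

/-- Index set of a basis of `Λ^q`. -/
abbrev Idx (n q : ℕ) := {I : Finset (Fin n) // I.card = q}

/-- Static differential `q`-forms: coefficient functions. -/
abbrev FormS (n q : ℕ) := Idx n q → Spc n → ℝ

/-- Time-dependent differential `q`-forms. -/
abbrev FormT (n q : ℕ) := Idx n q → ℝ → Spc n → ℝ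

/-- Fibre of the bundle `Λ^q`. -/
abbrev Fib (n q : ℕ) := Idx n q → ℝ

/-- The exterior derivative `d_q` on static `q`-forms. -/
def dS {q : ℕ} (u : FormS n q) : FormS n (q + 1) := fun J x =>
  ∑ i : Fin n,
    if h : i ∈ J.1 then
      (-1 : ℝ) ^ (J.1.filter fun j => j < i).card *
        pd i (u ⟨J.1.erase i, by simp [Finset.card_erase_of_mem h, J.2]⟩) x
    else 0

/-- The exterior derivative `d_{q-1}` mapping `(q-1)`-forms to `q`-forms. -/
def dLowS {q : ℕ} (p : FormS n (q - 1)) : FormS n q := fun J x =>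
  ∑ i : Fin n,
    if h : i ∈ J.1 ∧ (J.1.erase i).card = q - 1 then
      (-1 : ℝ) ^ (J.1.filter fun j => j < i).card * pd i (p ⟨J.1.erase i, h.2⟩) x
    else 0

/-- The formal adjoint `d_{q-1}^*` mapping `q`-forms to `(q-1)`-forms. -/
def coDS {q : ℕ} (u : FormS n q) : FormS n (q - 1) := fun K x =>
  -∑ i : Fin n,
    if h : i ∉ K.1 ∧ (insert i K.1).card = q then
      (-1 : ℝ) ^ (K.1.filter fun j => j < i).card * pd i (u ⟨insert i K.1, h.2⟩) x
    else 0

/-- `d_q` on time-dependent forms. -/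
def dT {q : ℕ} (u : FormT n q) : FormT n (q + 1) := fun J t => dS (fun I => u I t) J

/-- `d_{q-1}` on time-dependent forms. -/
def dLowT {q : ℕ} (p : FormT n (q - 1)) : FormT n q := fun J t => dLowS (fun I => p I t) J

/-- `d_{q-1}^*` on time-dependent forms. -/
def coDT {q : ℕ} (u : FormT n q) : FormT n (q - 1) := fun K t => coDS (fun I => u I t) K

/-- Norm of `C^{k,𝐬(s,λ,δ)}_{T,Λ^q}`. -/
def eAnisoKSF {q : ℕ} (T : ℝ) (k s : ℕ) (lam δ : ℝ) (u : FormT n q) : ℝ≥0∞ :=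
  ∑ I : Idx n q, eAnisoKS T k s lam δ (u I)

/-- Membership in `C^{k,𝐬(s,λ,δ)}_{T,Λ^q}`. -/
def CMemF {q : ℕ} (T : ℝ) (k s : ℕ) (lam δ : ℝ) (u : FormT n q) : Prop :=
  (∀ I, AnisoReg T k s (u I)) ∧ eAnisoKSF T k s lam δ u ≠ ⊤

/-- Graph norm of `C^{k,𝐬(s,λ,δ)}_{T,Λ^q,𝒟_{d⊕d*}}`. -/
def eCD {q : ℕ} (T : ℝ) (k s : ℕ) (lam δ : ℝ) (u : FormT n q) : ℝ≥0∞ :=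
  eAnisoKSF T k s lam δ u + eAnisoKSF T k s lam (δ + 1) (dT u) +
    eAnisoKSF T k s lam (δ + 1) (coDT u)

/-- Membership in `C^{k,𝐬(s,λ,δ)}_{T,Λ^q,𝒟_{d⊕d*}}`. -/
def CMemD {q : ℕ} (T : ℝ) (k s : ℕ) (lam δ : ℝ) (u : FormT n q) : Prop :=
  CMemF T k s lam δ u ∧ CMemF T k s lam (δ + 1) (dT u) ∧ CMemF T k s lam (δ + 1) (coDT u)

/-- Norm of `𝓕^{k,𝐬(s,λ,λ',δ)}_{T,Λ^q}`. -/
def eFF {q : ℕ} (T : ℝ) (k s : ℕ) (lam lam' δ : ℝ) (u : FormT n q) : ℝ≥0∞ :=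
  ∑ I : Idx n q, eFn T k s lam lam' δ (u I)

/-- Membership in `𝓕^{k,𝐬(s,λ,λ',δ)}_{T,Λ^q}`. -/
def FMemF {q : ℕ} (T : ℝ) (k s : ℕ) (lam lam' δ : ℝ) (u : FormT n q) : Prop :=
  (∀ I, AnisoReg T (k + 1) s (u I)) ∧ eFF T k s lam lam' δ u ≠ ⊤

/-- Graph norm of `𝓕^{k,𝐬(s,λ,λ',δ)}_{T,Λ^q,𝒟_{d⊕d*}}`. -/
def eFD {q : ℕ} (T : ℝ) (k s : ℕ) (lam lam' δ : ℝ) (u : FormT n q) : ℝ≥0∞ :=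
  eFF T k s lam lam' δ u + eFF T k s lam lam' (δ + 1) (dT u) +
    eFF T k s lam lam' (δ + 1) (coDT u)

/-- Membership in `𝓕^{k,𝐬(s,λ,λ',δ)}_{T,Λ^q,𝒟_{d⊕d*}}`. -/
def FMemD {q : ℕ} (T : ℝ) (k s : ℕ) (lam lam' δ : ℝ) (u : FormT n q) : Prop :=
  FMemF T k s lam lam' δ u ∧ FMemF T k s lam lam' (δ + 1) (dT u) ∧
    FMemF T k s lam lam' (δ + 1) (coDT u)

/-- Norm of the static space `C^{s,λ,δ}_{Λ^q}`. -/
def eHolSF {q : ℕ} (s : ℕ) (lam δ : ℝ) (g : FormS n q) : ℝ≥0∞ :=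
  ∑ I : Idx n q, eHolS s lam δ (g I)

/-- Membership in the static space `C^{s,λ,δ}_{Λ^q}`. -/
def HolMemF {q : ℕ} (s : ℕ) (lam δ : ℝ) (g : FormS n q) : Prop :=
  (∀ I, ContDiff ℝ s (g I)) ∧ eHolSF s lam δ g ≠ ⊤

/-- Equality of time-dependent forms on `ℝⁿ × [0,T]`. -/
def EqOnT {q : ℕ} (T : ℝ) (u v : FormT n q) : Prop :=
  ∀ I, ∀ t ∈ Set.Icc (0 : ℝ) T, ∀ x, u I t x = v I t x

/-- The form `u` is co-closed (`d^* u = 0`) on `ℝⁿ × [0,T]`. -/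
def CoClosed {q : ℕ} (T : ℝ) (u : FormT n q) : Prop :=
  ∀ K, ∀ t ∈ Set.Icc (0 : ℝ) T, ∀ x, coDT u K t x = 0

/-- Type of the bilinear zero order operator `M₁^{(q)}`. -/
abbrev M1Type (n q : ℕ) := (Fib n (q + 1) × Fib n (q - 1)) →ₗ[ℝ] Fib n q →ₗ[ℝ] Fib n q

/-- Type of the bilinear zero order operator `M₂^{(q)}`. -/
abbrev M2Type (n q : ℕ) := Fib n q →ₗ[ℝ] Fib n q →ₗ[ℝ] Fib n (q - 1)

/-- Value of a time-dependent form at a point, as an element of the fibre. -/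
def fib {q : ℕ} (u : FormT n q) (t : ℝ) (x : Spc n) : Fib n q := fun I => u I t x

/-- Value of `(d_q ⊕ d_{q-1}^*) u` at a point. -/
def ddFib {q : ℕ} (u : FormT n q) (t : ℝ) (x : Spc n) : Fib n (q + 1) × Fib n (q - 1) :=
  (fun J => dT u J t x, fun K => coDT u K t x)

/-- The operator `W_q u = M₁((d⊕d^*)u, w) + M₁((d⊕d^*)w, u)`. -/
def Wop {q : ℕ} (M₁ : M1Type n q) (w u : FormT n q) : FormT n q := fun I t x =>
  M₁ (ddFib u t x) (fib w t x) I + M₁ (ddFib w t x) (fib u t x) I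

/-- The symmetric bilinearization `B_q(w,u)` of the nonlinearity. -/
def Bop {q : ℕ} (M₁ : M1Type n q) (M₂ : M2Type n q) (w u : FormT n q) : FormT n q :=
  fun I t x =>
    Wop M₁ w u I t x +
      dLowT (fun K t' x' =>
        M₂ (fib u t' x') (fib w t' x') K + M₂ (fib w t' x') (fib u t' x') K) I t x

/-- The nonlinearity `𝒩_q u = M₁((d⊕d^*)u, u) + d_{q-1} M₂(u,u)`. -/
def Nop {q : ℕ} (M₁ : M1Type n q) (M₂ : M2Type n q) (u : FormT n q) : FormT n q :=
  fun I t x =>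
    M₁ (ddFib u t x) (fib u t x) I +
      dLowT (fun K t' x' => M₂ (fib u t' x') (fib u t' x') K) I t x

/-- Fundamental solution of the heat operator `∂_t - μΔ`. -/
def heatKer (μ : ℝ) (x : Spc n) (t : ℝ) : ℝ :=
  if 0 < t then (4 * Real.pi * μ * t) ^ (-(n : ℝ) / 2) * Real.exp (-‖x‖ ^ 2 / (4 * μ * t))
  else 0

/-- Volume heat potential `Ψ_μ`. -/
def volPot (μ : ℝ) (f : ℝ → Spc n → ℝ) (t : ℝ) (x : Spc n) : ℝ :=
  ∫ τ in Set.Ioc (0 : ℝ) t, ∫ y : Spc n, heatKer μ (x - y) (t - τ) * f τ y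

/-- Poisson heat potential `Ψ_{μ,0}`. -/
def poisPot (μ : ℝ) (g : Spc n → ℝ) (t : ℝ) (x : Spc n) : ℝ :=
  ∫ y : Spc n, heatKer μ (x - y) t * g y

/-- Volume heat potential acting coefficient-wise on forms. -/
def volPotF {q : ℕ} (μ : ℝ) (f : FormT n q) : FormT n q := fun I => volPot μ (f I)

/-- Poisson heat potential acting coefficient-wise on forms. -/
def poisPotF {q : ℕ} (μ : ℝ) (g : FormS n q) : FormT n q := fun I => poisPot μ (g I)

/-- Area of the unit sphere in `ℝⁿ`. -/
def sphArea (n : ℕ) : ℝ := 2 * Real.pi ^ ((n : ℝ) / 2) / Real.Gamma ((n : ℝ) / 2)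

/-- Standard fundamental solution of the Laplace operator in `ℝⁿ`. -/
def lapKer (n : ℕ) (x : Spc n) : ℝ :=
  if n = 2 then (1 / Real.pi) * Real.log ‖x‖
  else ‖x‖ ^ (2 - (n : ℝ)) / (sphArea n * (2 - (n : ℝ)))

/-- Newtonian potential. -/
def newtPot (f : Spc n → ℝ) (x : Spc n) : ℝ := ∫ y : Spc n, lapKer n (x - y) * f y

/-- The integral operator `Φ_q` mapping `(q+1)`-forms to `q`-forms;
concretely `Φ_q f = -d^* (e * f)`. -/
def PhiOp {q : ℕ} (f : FormT n (q + 1)) : FormT n q := fun K t x =>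
  -coDS (n := n) (q := q + 1) (fun J y => newtPot (fun z => f J t z) y) K x

/-- Squared `L²` norm of a form at time `t`. -/
def l2Sq {q : ℕ} (u : FormT n q) (t : ℝ) : ℝ :=
  ∑ I : Idx n q, ∫ x : Spc n, (u I t x) ^ 2

/-- Squared `L²` norm of the spatial gradient of a form at time `t`. -/
def gradSq {q : ℕ} (u : FormT n q) (t : ℝ) : ℝ :=
  ∑ I : Idx n q, ∑ i : Fin n, ∫ x : Spc n, (pd i (fun y => u I t y) x) ^ 2

/-- The norm of `C^{0,𝐬(0,0,δ)}_{T,Λ^q}` (weighted sup-norm). -/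
def eSupT {q : ℕ} (T δ : ℝ) (u : FormT n q) : ℝ≥0∞ :=
  ∑ I : Idx n q,
    ⨆ (t : Set.Icc (0 : ℝ) T) (x : Spc n), ENNReal.ofReal (wt x ^ δ * |u I t x|)

/-- The norm `‖∇u‖_{C^{0,𝐬(0,0,δ)}_{T}}` of the spatial gradient. -/
def eSupGradT {q : ℕ} (T δ : ℝ) (u : FormT n q) : ℝ≥0∞ :=
  ∑ I : Idx n q, ∑ i : Fin n,
    ⨆ (t : Set.Icc (0 : ℝ) T) (x : Spc n),
      ENNReal.ofReal (wt x ^ δ * |pd i (fun y => u I t y) x|)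

/-- `q`-form with coefficients harmonic polynomials of degree at most `m`. -/
def HarmPolyForm {q : ℕ} (m : ℕ) (h : FormS n q) : Prop :=
  ∀ I, (∃ P : MvPolynomial (Fin n) ℝ, P.totalDegree ≤ m ∧
      ∀ x : Spc n, h I x = MvPolynomial.eval (fun i => x i) P) ∧
    ∀ x : Spc n, lap (h I) x = 0

/-- Classical solution of the Cauchy problem
`∂_t u - μ Δ u + extra = f` on `ℝⁿ × (0,T)`, `u(·,0) = u₀`. -/
def CauchySol {q : ℕ} (T μ : ℝ) (u extra f : FormT n q) (u₀ : FormS n q) : Prop :=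
  (∀ I, ∀ t ∈ Set.Ioo (0 : ℝ) T, ∀ x,
    deriv (fun τ => u I τ x) t - μ * lap (fun y => u I t y) x + extra I t x = f I t x) ∧
  ∀ I x, u I 0 x = u₀ I x

/-- `Ψ_{μ,q} 𝒩_q u`. -/
def NopPot {q : ℕ} (μ : ℝ) (M₁ : M1Type n q) (M₂ : M2Type n q) (u : FormT n q) : FormT n q :=
  volPotF μ (Nop M₁ M₂ u)

/-- `u + Ψ_{μ,q} 𝒩_q u`. -/
def TmapN {q : ℕ} (μ : ℝ) (M₁ : M1Type n q) (M₂ : M2Type n q) (u : FormT n q) : FormT n q :=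
  u + NopPot μ M₁ M₂ u

/-- The linearization `u + Ψ_{μ,q} B_q(v,u)`. -/
def LmapB {q : ℕ} (μ : ℝ) (M₁ : M1Type n q) (M₂ : M2Type n q) (v u : FormT n q) :
    FormT n q :=
  u + volPotF μ (Bop M₁ M₂ v u)

/-- `Φ_q d_q Ψ_{μ,q} 𝒩_q u`. -/
def PhiNpot {q : ℕ} (μ : ℝ) (M₁ : M1Type n q) (M₂ : M2Type n q) (u : FormT n q) :
    FormT n q :=
  PhiOp (dT (volPotF μ (Nop M₁ M₂ u)))

/-- `u + Φ_q d_q Ψ_{μ,q} 𝒩_q u`. -/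
def PhiNmap {q : ℕ} (μ : ℝ) (M₁ : M1Type n q) (M₂ : M2Type n q) (u : FormT n q) :
    FormT n q :=
  u + PhiNpot μ M₁ M₂ u

/-- The linearization `u + Φ_q d_q Ψ_{μ,q} B_q(v,u)`. -/
def PhiLmap {q : ℕ} (μ : ℝ) (M₁ : M1Type n q) (M₂ : M2Type n q) (v u : FormT n q) :
    FormT n q :=
  u + PhiOp (dT (volPotF μ (Bop M₁ M₂ v u)))

/-!
By the Leibniz rule in `t` and in `x`, every mixed derivative `∂ₓ^α ∂ₜ^j (u v)` is a finite sum of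
products `∂ₓ^β ∂ₜ^i u · ∂ₓ^(α-β) ∂ₜ^(j-i) v`; evaluating the multilinear maps on tuples of basis
vectors turns this into the pointwise bounds `‖W‖ ≤ ∑ ‖U‖ ‖V‖` and
`‖W p - W p'‖ ≤ ∑ (‖U p - U p'‖ ‖V p‖ + ‖U p'‖ ‖V p - V p'‖)`. Every quotient in the norm of
`C^{𝐬(0,λ,δ)}_T` is a weighted (difference) quotient, and the weights split multiplicatively:
`w^(δ+δ') = w^δ w^δ'`, while on the Hölder region `‖x - y‖ ≤ ‖x‖ / 2` the weights `w x`, `w y`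
and `w(x,y)` agree up to a factor `2`. So each quotient of the product is bounded by a constant
times the product of the norms of the factors.
-/

section Multilinear

variable {m : ℕ}

def basisTuple (σ : Fin m → Fin n) : Fin m → Spc n := fun i => EuclideanSpace.single (σ i) 1

lemma apply_eq_sum_basisTuple (A : ContinuousMultilinearMap ℝ (fun _ : Fin m => Spc n) ℝ)
    (v : Fin m → Spc n) :
    A v = ∑ σ : Fin m → Fin n, (∏ i, v i (σ i)) * A (basisTuple σ) := by
  have hv : v = fun i => ∑ j, v i j • EuclideanSpace.single j (1 : ℝ) := by
    funext i; ext j; simp [Pi.single_apply]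
  conv_lhs => rw [hv, A.map_sum]
  simp only [A.map_smul_univ, smul_eq_mul]
  rfl

lemma eq_sum_smul_basisTuple (A : ContinuousMultilinearMap ℝ (fun _ : Fin m => Spc n) ℝ) :
    A = ∑ σ : Fin m → Fin n, A (basisTuple σ) •
      (ContinuousMultilinearMap.mkPiAlgebra ℝ (Fin m) ℝ).compContinuousLinearMap
        fun i => EuclideanSpace.proj (σ i) := by
  ext v
  simp [apply_eq_sum_basisTuple A v, mul_comm]

lemma norm_le_sum_abs_apply_basisTuple
    (A : ContinuousMultilinearMap ℝ (fun _ : Fin m => Spc n) ℝ) :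
    ‖A‖ ≤ ∑ σ : Fin m → Fin n, |A (basisTuple σ)| := by
  refine A.opNorm_le_bound (by positivity) fun v => ?_
  rw [apply_eq_sum_basisTuple, Finset.sum_mul]
  refine (norm_sum_le _ _).trans (Finset.sum_le_sum fun σ _ => ?_)
  rw [norm_mul, Real.norm_eq_abs, Real.norm_eq_abs, mul_comm, Finset.abs_prod]
  gcongr with i
  exact PiLp.norm_apply_le (v i) (σ i)

lemma abs_apply_basisTuple_le_norm (A : ContinuousMultilinearMap ℝ (fun _ : Fin m => Spc n) ℝ)
    (σ : Fin m → Fin n) : |A (basisTuple σ)| ≤ ‖A‖ := by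
  simpa [basisTuple] using A.le_opNorm (basisTuple σ)

lemma norm_le_sum_of_apply_basisTuple {A : ContinuousMultilinearMap ℝ (fun _ : Fin m => Spc n) ℝ}
    {ι : (Fin m → Fin n) → Type*} [∀ σ, Fintype (ι σ)] {f g : ∀ σ, ι σ → ℝ}
    (hA : ∀ σ, A (basisTuple σ) = ∑ ρ, f σ ρ * g σ ρ) :
    ‖A‖ ≤ ∑ p : Σ σ, ι σ, |f p.1 p.2| * |g p.1 p.2| := by
  rw [Fintype.sum_sigma]
  refine (norm_le_sum_abs_apply_basisTuple A).trans (Finset.sum_le_sum fun σ _ => ?_)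
  rw [hA]
  refine (Finset.abs_sum_le_sum_abs _ _).trans (le_of_eq ?_)
  simp only [abs_mul]

lemma norm_sub_le_of_apply_basisTuple
    {A A' : ContinuousMultilinearMap ℝ (fun _ : Fin m => Spc n) ℝ}
    {ι : (Fin m → Fin n) → Type*} [∀ σ, Fintype (ι σ)] {f g f' g' : ∀ σ, ι σ → ℝ}
    (hA : ∀ σ, A (basisTuple σ) = ∑ ρ, f σ ρ * g σ ρ)
    (hA' : ∀ σ, A' (basisTuple σ) = ∑ ρ, f' σ ρ * g' σ ρ) :
    ‖A - A'‖ ≤ ∑ p : Σ σ, ι σ, (|f p.1 p.2 - f' p.1 p.2| * |g p.1 p.2|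
      + |f' p.1 p.2| * |g p.1 p.2 - g' p.1 p.2|) := by
  rw [Fintype.sum_sigma]
  refine (norm_le_sum_abs_apply_basisTuple _).trans (Finset.sum_le_sum fun σ _ => ?_)
  rw [sub_apply, hA, hA', ← Finset.sum_sub_distrib]
  refine (Finset.abs_sum_le_sum_abs _ _).trans (Finset.sum_le_sum fun ρ _ => ?_)
  rw [← abs_mul, ← abs_mul, show f σ ρ * g σ ρ - f' σ ρ * g' σ ρ =
    (f σ ρ - f' σ ρ) * g σ ρ + f' σ ρ * (g σ ρ - g' σ ρ) by ring]
  exact abs_add_le _ _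

end Multilinear

section Leibniz

def pdIter : (m : ℕ) → (Fin m → Fin n) → (Spc n → ℝ) → Spc n → ℝ
  | 0, _, h => h
  | m + 1, σ, h => pd (σ 0) (pdIter m (Fin.tail σ) h)

lemma pdIter_cons {m : ℕ} (i : Fin n) (σ : Fin m → Fin n) (h : Spc n → ℝ) :
    pdIter (m + 1) (Fin.cons i σ) h = pd i (pdIter m σ h) := by
  rw [pdIter, Fin.cons_zero, Fin.tail_cons]

lemma iteratedFDeriv_apply_basisTuple {m : ℕ} (σ : Fin m → Fin n) {h : Spc n → ℝ}
    (hh : ContDiff ℝ m h) (x : Spc n) :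
    iteratedFDeriv ℝ m h x (basisTuple σ) = pdIter m σ h x := by
  induction m generalizing x with
  | zero => rfl
  | succ m ih =>
    have hd : DifferentiableAt ℝ (iteratedFDeriv ℝ m h) x :=
      hh.differentiable_iteratedFDeriv (by exact_mod_cast Nat.lt_succ_self m) x
    rw [iteratedFDeriv_succ_apply_left, ← fderiv_continuousMultilinear_apply_const_apply hd]
    have htail : (fun y => iteratedFDeriv ℝ m h y (Fin.tail (basisTuple σ))) =
        pdIter m (Fin.tail σ) h :=
      funext (ih (Fin.tail σ) (hh.of_le (by exact_mod_cast Nat.le_succ m)))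
    rw [htail]
    rfl

lemma differentiable_pdIter {m N : ℕ} (hm : m < N) (σ : Fin m → Fin n) {h : Spc n → ℝ}
    (hh : ContDiff ℝ N h) : Differentiable ℝ (pdIter m σ h) := by
  have heq : pdIter m σ h = fun y => iteratedFDeriv ℝ m h y (basisTuple σ) :=
    funext fun y => (iteratedFDeriv_apply_basisTuple σ (hh.of_le (by exact_mod_cast hm.le)) y).symm
  rw [heq]
  have hd : Differentiable ℝ (iteratedFDeriv ℝ m h) :=
    hh.differentiable_iteratedFDeriv (by exact_mod_cast hm)
  exact fun x => (hd x).continuousMultilinear_apply_const _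

lemma pdIter_sum {ι : Type*} (s : Finset ι) {m : ℕ} (σ : Fin m → Fin n) {h : ι → Spc n → ℝ}
    (hh : ∀ r ∈ s, ContDiff ℝ m (h r)) :
    pdIter m σ (fun y => ∑ r ∈ s, h r y) = fun y => ∑ r ∈ s, pdIter m σ (h r) y := by
  induction m with
  | zero => rfl
  | succ m ih =>
    funext x
    rw [pdIter, ih (Fin.tail σ) fun r hr => (hh r hr).of_le (by exact_mod_cast Nat.le_succ m),
      pd, fderiv_fun_sum fun r hr => differentiable_pdIter (Nat.lt_succ_self m) _ (hh r hr) x,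
      sum_apply]
    rfl

lemma exists_pdIter_mul (m : ℕ) (σ : Fin m → Fin n) :
    ∃ (ι : Type) (_ : Fintype ι) (F G : ι → Σ a : ℕ, Fin a → Fin n),
      (∀ r, (F r).1 + (G r).1 = m) ∧
      ∀ f g : Spc n → ℝ, ContDiff ℝ m f → ContDiff ℝ m g →
        pdIter m σ (fun y => f y * g y) =
          fun x => ∑ r, pdIter (F r).1 (F r).2 f x * pdIter (G r).1 (G r).2 g x := by
  induction m with
  | zero =>
    exact ⟨PUnit, inferInstance, fun _ => ⟨0, Fin.elim0⟩, fun _ => ⟨0, Fin.elim0⟩,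
      fun _ => rfl, fun f g _ _ => funext fun x => by simp [pdIter]⟩
  | succ m ih =>
    obtain ⟨ι, _, F, G, hFG, hid⟩ := ih (Fin.tail σ)
    -- `∂_{σ 0}` of the `r`-th product falls on the `f`-factor (left copy of `ι`) or the `g`-factor
    refine ⟨ι ⊕ ι, inferInstance,
      Sum.elim (fun r => ⟨(F r).1 + 1, Fin.cons (σ 0) (F r).2⟩) F,
      Sum.elim G (fun r => ⟨(G r).1 + 1, Fin.cons (σ 0) (G r).2⟩),
      fun p => by
        rcases p with r | r <;> simp only [Sum.elim_inl, Sum.elim_inr] <;> have := hFG r <;> omega,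
      fun f g hf hg => funext fun x => ?_⟩
    have hle : ((m : ℕ) : WithTop ℕ∞) ≤ (m + 1 : ℕ) := by exact_mod_cast Nat.le_succ m
    have hdF : ∀ r, Differentiable ℝ (pdIter (F r).1 (F r).2 f) := fun r =>
      differentiable_pdIter (by have := hFG r; omega) _ hf
    have hdG : ∀ r, Differentiable ℝ (pdIter (G r).1 (G r).2 g) := fun r =>
      differentiable_pdIter (by have := hFG r; omega) _ hg
    rw [pdIter, hid f g (hf.of_le hle) (hg.of_le hle), pd,
      fderiv_fun_sum (A := fun r y => pdIter (F r).1 (F r).2 f y * pdIter (G r).1 (G r).2 g y)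
        fun r _ => (hdF r x).mul (hdG r x), sum_apply,
      Fintype.sum_sum_type, ← Finset.sum_add_distrib]
    refine Finset.sum_congr rfl fun r _ => ?_
    rw [fderiv_fun_mul (hdF r x) (hdG r x)]
    simp only [Sum.elim_inl, Sum.elim_inr, pdIter_cons, add_apply,
      smul_apply, smul_eq_mul, pd]
    ring

lemma exists_iteratedDerivWithin_mul {s : Set ℝ} (hs : UniqueDiffOn ℝ s) (j : ℕ) :
    ∃ (ι : Type) (_ : Fintype ι) (a b : ι → ℕ), (∀ r, a r + b r = j) ∧
      ∀ φ ψ : ℝ → ℝ, ContDiffOn ℝ j φ s → ContDiffOn ℝ j ψ s → ∀ t ∈ s,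
        iteratedDerivWithin j (fun τ => φ τ * ψ τ) s t =
          ∑ r, iteratedDerivWithin (a r) φ s t * iteratedDerivWithin (b r) ψ s t := by
  induction j with
  | zero =>
    exact ⟨PUnit, inferInstance, fun _ => 0, fun _ => 0, fun _ => rfl, fun φ ψ _ _ t _ => by simp⟩
  | succ j ih =>
    obtain ⟨ι, _, a, b, hab, hid⟩ := ih
    refine ⟨ι ⊕ ι, inferInstance, Sum.elim (fun r => a r + 1) a, Sum.elim b (fun r => b r + 1),
      fun p => by
        rcases p with r | r <;> simp only [Sum.elim_inl, Sum.elim_inr] <;> have := hab r <;> omega,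
      fun φ ψ hφ hψ t ht => ?_⟩
    have hle : ((j : ℕ) : WithTop ℕ∞) ≤ (j + 1 : ℕ) := by exact_mod_cast Nat.le_succ j
    have hdA : ∀ r, DifferentiableWithinAt ℝ (iteratedDerivWithin (a r) φ s) s t := fun r =>
      hφ.differentiableOn_iteratedDerivWithin
        (by have := hab r; exact_mod_cast (by omega : a r < j + 1)) hs t ht
    have hdB : ∀ r, DifferentiableWithinAt ℝ (iteratedDerivWithin (b r) ψ s) s t := fun r =>
      hψ.differentiableOn_iteratedDerivWithin
        (by have := hab r; exact_mod_cast (by omega : b r < j + 1)) hs t ht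
    have hEq : Set.EqOn (iteratedDerivWithin j (fun τ => φ τ * ψ τ) s)
        (fun τ => ∑ r, iteratedDerivWithin (a r) φ s τ * iteratedDerivWithin (b r) ψ s τ) s :=
      fun τ hτ => hid φ ψ (hφ.of_le hle) (hψ.of_le hle) τ hτ
    rw [iteratedDerivWithin_succ, derivWithin_congr hEq (hEq ht),
      derivWithin_fun_sum (A := fun r τ => iteratedDerivWithin (a r) φ s τ *
        iteratedDerivWithin (b r) ψ s τ) fun r _ => (hdA r).mul (hdB r), Fintype.sum_sum_type,
      ← Finset.sum_add_distrib]
    refine Finset.sum_congr rfl fun r _ => ?_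
    rw [derivWithin_fun_mul (hdA r) (hdB r)]
    simp only [Sum.elim_inl, Sum.elim_inr, iteratedDerivWithin_succ]

end Leibniz

section LeibnizBoundDef

variable {F : Type*} [NormedAddCommGroup F] {ι : Type*} [Fintype ι] {G H : ι → Type*}
  [∀ ρ, NormedAddCommGroup (G ρ)] [∀ ρ, NormedAddCommGroup (H ρ)]

def LeibnizBound (T : ℝ) (W : ℝ → Spc n → F) (U : ∀ ρ, ℝ → Spc n → G ρ)
    (V : ∀ ρ, ℝ → Spc n → H ρ) : Prop :=
  (∀ t ∈ Set.Icc 0 T, ∀ x, ‖W t x‖ ≤ ∑ ρ, ‖U ρ t x‖ * ‖V ρ t x‖) ∧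
    ∀ t ∈ Set.Icc 0 T, ∀ t' ∈ Set.Icc 0 T, ∀ x y, ‖W t x - W t' y‖ ≤
      ∑ ρ, (‖U ρ t x - U ρ t' y‖ * ‖V ρ t x‖ + ‖U ρ t' y‖ * ‖V ρ t x - V ρ t' y‖)

end LeibnizBoundDef

section ProductRule

variable {T : ℝ} {k s : ℕ}

lemma AnisoReg.contDiff_tDeriv {u : ℝ → Spc n → ℝ} (hu : AnisoReg T k s u) {i N : ℕ}
    (hi : i ≤ s) (hN : N + 2 * i ≤ 2 * s + k) {t : ℝ} (ht : t ∈ Set.Icc 0 T) :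
    ContDiff ℝ N (tDeriv T i u t) := by
  have hle : ((N : ℕ) : WithTop ℕ∞) ≤ ((2 * (s - i) + k : ℕ) : WithTop ℕ∞) := by
    exact_mod_cast (by omega : N ≤ 2 * (s - i) + k)
  exact (hu.2.1 i hi t ht).of_le hle

lemma exists_tDeriv_mul (hT : 0 < T) {j : ℕ} (hj : j ≤ s) :
    ∃ (ι : Type) (_ : Fintype ι) (a b : ι → ℕ), (∀ r, a r + b r = j) ∧
      ∀ u v : ℝ → Spc n → ℝ, AnisoReg T k s u → AnisoReg T k s v → ∀ t ∈ Set.Icc 0 T,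
        tDeriv T j (u * v) t = fun y => ∑ r, tDeriv T (a r) u t y * tDeriv T (b r) v t y := by
  obtain ⟨ι, _, a, b, hab, hid⟩ := exists_iteratedDerivWithin_mul (uniqueDiffOn_Icc hT) j
  have hle : ((j : ℕ) : WithTop ℕ∞) ≤ s := by exact_mod_cast hj
  exact ⟨ι, inferInstance, a, b, hab, fun u v hu hv t ht => funext fun y =>
    hid _ _ ((hu.1 y).of_le hle) ((hv.1 y).of_le hle) t ht⟩

lemma contDiff_tDeriv_mul (hT : 0 < T) {u v : ℝ → Spc n → ℝ} (hu : AnisoReg T k s u)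
    (hv : AnisoReg T k s v) {j N : ℕ} (hj : j ≤ s) (hN : N + 2 * j ≤ 2 * s + k) {t : ℝ}
    (ht : t ∈ Set.Icc 0 T) : ContDiff ℝ N (tDeriv T j (u * v) t) := by
  obtain ⟨ι, _, a, b, hab, hid⟩ := exists_tDeriv_mul (k := k) hT hj
  rw [hid u v hu hv t ht]
  exact ContDiff.sum fun r _ =>
    (hu.contDiff_tDeriv (by have := hab r; omega) (by have := hab r; omega) ht).mul
      (hv.contDiff_tDeriv (by have := hab r; omega) (by have := hab r; omega) ht)

lemma exists_mixDeriv_mul_apply_basisTuple (hT : 0 < T) {M j : ℕ} (hj : j ≤ s)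
    (hM : M + 2 * j ≤ 2 * s + k) (σ : Fin M → Fin n) :
    ∃ (ι : Type) (_ : Fintype ι) (au av iu iv : ι → ℕ)
      (τu : ∀ ρ, Fin (au ρ) → Fin n) (τv : ∀ ρ, Fin (av ρ) → Fin n),
      (∀ ρ, au ρ + av ρ = M ∧ iu ρ + iv ρ = j) ∧
      ∀ u v : ℝ → Spc n → ℝ, AnisoReg T k s u → AnisoReg T k s v → ∀ t ∈ Set.Icc 0 T, ∀ x,
        mixDeriv T M j (u * v) t x (basisTuple σ) =
          ∑ ρ, mixDeriv T (au ρ) (iu ρ) u t x (basisTuple (τu ρ)) *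
            mixDeriv T (av ρ) (iv ρ) v t x (basisTuple (τv ρ)) := by
  obtain ⟨ι₁, _, a, b, hab, hid₁⟩ := exists_tDeriv_mul (k := k) hT hj
  obtain ⟨ι₂, _, F, G, hFG, hid₂⟩ := exists_pdIter_mul M σ
  refine ⟨ι₁ × ι₂, inferInstance, fun ρ => (F ρ.2).1, fun ρ => (G ρ.2).1, fun ρ => a ρ.1,
    fun ρ => b ρ.1, fun ρ => (F ρ.2).2, fun ρ => (G ρ.2).2, fun ρ => ⟨hFG ρ.2, hab ρ.1⟩,
    fun u v hu hv t ht x => ?_⟩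
  have hu' : ∀ r N, N ≤ M → ContDiff ℝ N (tDeriv T (a r) u t) := fun r N hN =>
    hu.contDiff_tDeriv (by have := hab r; omega) (by have := hab r; omega) ht
  have hv' : ∀ r N, N ≤ M → ContDiff ℝ N (tDeriv T (b r) v t) := fun r N hN =>
    hv.contDiff_tDeriv (by have := hab r; omega) (by have := hab r; omega) ht
  rw [mixDeriv, iteratedFDeriv_apply_basisTuple σ (contDiff_tDeriv_mul hT hu hv hj hM ht),
    hid₁ u v hu hv t ht, pdIter_sum _ σ fun r _ => (hu' r M le_rfl).mul (hv' r M le_rfl),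
    Fintype.sum_prod_type]
  refine Finset.sum_congr rfl fun r _ => ?_
  rw [hid₂ _ _ (hu' r M le_rfl) (hv' r M le_rfl)]
  refine Finset.sum_congr rfl fun q _ => ?_
  have := hFG q
  rw [mixDeriv, mixDeriv, iteratedFDeriv_apply_basisTuple _ (hu' r (F q).1 (by omega)),
    iteratedFDeriv_apply_basisTuple _ (hv' r (G q).1 (by omega))]

lemma exists_leibnizBound_mixDeriv_mul (hT : 0 < T) {M j : ℕ} (hj : j ≤ s)
    (hM : M + 2 * j ≤ 2 * s + k) :
    ∃ (ι : Type) (_ : Fintype ι) (au av iu iv : ι → ℕ),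
      (∀ ρ, au ρ + av ρ = M ∧ iu ρ + iv ρ = j) ∧
      ∀ u v : ℝ → Spc n → ℝ, AnisoReg T k s u → AnisoReg T k s v →
        LeibnizBound T (mixDeriv T M j (u * v)) (fun ρ => mixDeriv T (au ρ) (iu ρ) u)
          (fun ρ => mixDeriv T (av ρ) (iv ρ) v) := by
  choose ι _ au av iu iv τu τv hsum hID using
    exists_mixDeriv_mul_apply_basisTuple (n := n) hT hj hM
  refine ⟨Σ σ, ι σ, inferInstance, fun p => au p.1 p.2, fun p => av p.1 p.2,
    fun p => iu p.1 p.2, fun p => iv p.1 p.2, fun p => hsum p.1 p.2,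
    fun u v hu hv => ⟨fun t ht x => ?_, fun t ht t' ht' x y => ?_⟩⟩
  · refine (norm_le_sum_of_apply_basisTuple (hID · u v hu hv t ht x)).trans
      (Finset.sum_le_sum fun p _ => ?_)
    gcongr <;> exact abs_apply_basisTuple_le_norm _ _
  · refine (norm_sub_le_of_apply_basisTuple (hID · u v hu hv t ht x)
      (hID · u v hu hv t' ht' y)).trans (Finset.sum_le_sum fun p _ => ?_)
    simp only [← sub_apply]
    gcongr <;> exact abs_apply_basisTuple_le_norm _ _

lemma AnisoReg.mul (hT : 0 < T) {u v : ℝ → Spc n → ℝ} (hu : AnisoReg T k s u)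
    (hv : AnisoReg T k s v) : AnisoReg T k s (u * v) := by
  refine ⟨fun x => (hu.1 x).mul (hv.1 x),
    fun j hj t ht => contDiff_tDeriv_mul (N := 2 * (s - j) + k) hT hu hv hj (by omega) ht,
    fun j m hj hm => ?_⟩
  choose ι _ au av iu iv τu τv hsum hID using
    exists_mixDeriv_mul_apply_basisTuple (n := n) hT hj hm
  have hcoord : ∀ σ, Continuous fun p : Set.Icc (0 : ℝ) T × Spc n =>
      mixDeriv T m j (u * v) p.1 p.2 (basisTuple σ) := by
    intro σ
    simp_rw [hID σ u v hu hv _ (Subtype.prop _)]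
    refine continuous_finsetSum _ fun ρ _ => Continuous.mul ?_ ?_
    · exact (continuous_eval_const _).comp
        (hu.2.2 _ _ (by have := hsum σ ρ; omega) (by have := hsum σ ρ; omega))
    · exact (continuous_eval_const _).comp
        (hv.2.2 _ _ (by have := hsum σ ρ; omega) (by have := hsum σ ρ; omega))
  rw [show (fun p : Set.Icc (0 : ℝ) T × Spc n => mixDeriv T m j (u * v) p.1 p.2) = _ from
    funext fun p => eq_sum_smul_basisTuple _]
  exact continuous_finsetSum _ fun σ _ => (hcoord σ).smul continuous_const

end ProductRule

section Quotients

variable {F : Type*} [NormedAddCommGroup F] {T lam δ : ℝ} {W : ℝ → Spc n → F}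

lemma eHol0_le_eAniso0 {t : ℝ} (ht : t ∈ Set.Icc 0 T) : eHol0 lam δ (W t) ≤ eAniso0 T lam δ W :=
  (le_iSup (fun t' : Set.Icc (0 : ℝ) T => eHol0 lam δ (W t')) ⟨t, ht⟩).trans le_self_add

lemma ofReal_wt_rpow_mul_norm_le_eAniso0 {t : ℝ} (ht : t ∈ Set.Icc 0 T) (x : Spc n) :
    ENNReal.ofReal (wt x ^ δ * ‖W t x‖) ≤ eAniso0 T lam δ W := by
  refine le_trans ?_ (eHol0_le_eAniso0 ht)
  rw [eHol0]
  split_ifs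
  · exact le_iSup_of_le x le_rfl
  · refine le_trans ?_ (le_add_self.trans le_self_add)
    exact le_iSup_of_le x le_rfl

lemma ofReal_norm_le_eAniso0 (hl : lam ≠ 0) {t : ℝ} (ht : t ∈ Set.Icc 0 T) {x : Spc n}
    (hx : ‖x‖ ≤ 1) : ENNReal.ofReal ‖W t x‖ ≤ eAniso0 T lam δ W := by
  refine le_trans ?_ (eHol0_le_eAniso0 ht)
  rw [eHol0, if_neg hl, eOHold]
  refine le_trans ?_ (le_self_add.trans (le_self_add.trans le_self_add))
  exact le_iSup₂_of_le x hx le_rfl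

lemma ofReal_holderQuot_le_eAniso0 (hl : lam ≠ 0) {t : ℝ} (ht : t ∈ Set.Icc 0 T)
    {x y : Spc n} (hxy : ‖x‖ ≤ 1 ∧ ‖y‖ ≤ 1 ∧ x ≠ y) :
    ENNReal.ofReal (‖W t x - W t y‖ / ‖x - y‖ ^ lam) ≤ eAniso0 T lam δ W := by
  refine le_trans ?_ (eHol0_le_eAniso0 ht)
  rw [eHol0, if_neg hl, eOHold]
  refine le_trans ?_ (le_add_self.trans (le_self_add.trans le_self_add))
  exact le_iSup₂_of_le x y (le_iSup_of_le hxy le_rfl)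

lemma ofReal_weightedHolderQuot_le_eAniso0 (hl : lam ≠ 0) {t : ℝ} (ht : t ∈ Set.Icc 0 T)
    {x y : Spc n} (hxy : x ≠ y ∧ ‖x - y‖ ≤ ‖x‖ / 2) :
    ENNReal.ofReal (wt2 x y ^ (δ + lam) * ‖W t x - W t y‖ / ‖x - y‖ ^ lam) ≤
      eAniso0 T lam δ W := by
  refine le_trans ?_ (eHol0_le_eAniso0 ht)
  rw [eHol0, if_neg hl]
  refine le_trans ?_ le_add_self
  exact le_iSup₂_of_le x y (le_iSup_of_le hxy le_rfl)

lemma ofReal_timeHolderQuot_le_eAniso0 (hl : lam ≠ 0) {t₁ t₂ : ℝ} (h₁ : t₁ ∈ Set.Icc 0 T)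
    (h₂ : t₂ ∈ Set.Icc 0 T) (hne : t₁ ≠ t₂) (x : Spc n) :
    ENNReal.ofReal (wt x ^ δ * ‖W t₁ x - W t₂ x‖ / |t₁ - t₂| ^ (lam / 2)) ≤
      eAniso0 T lam δ W := by
  rw [eAniso0, if_neg hl]
  refine le_trans ?_ le_add_self
  exact le_iSup₂_of_le ⟨t₁, h₁⟩ ⟨t₂, h₂⟩ (le_iSup₂_of_le hne x le_rfl)

lemma eAniso0_le_of_forall {K : ℝ≥0∞}
    (hsup : ∀ t ∈ Set.Icc 0 T, ∀ x, ENNReal.ofReal (wt x ^ δ * ‖W t x‖) ≤ K)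
    (hball : lam ≠ 0 → ∀ t ∈ Set.Icc 0 T, ∀ x : Spc n, ‖x‖ ≤ 1 → ENNReal.ofReal ‖W t x‖ ≤ K)
    (hholder : lam ≠ 0 → ∀ t ∈ Set.Icc 0 T, ∀ x y : Spc n, ‖x‖ ≤ 1 ∧ ‖y‖ ≤ 1 ∧ x ≠ y →
      ENNReal.ofReal (‖W t x - W t y‖ / ‖x - y‖ ^ lam) ≤ K)
    (hweighted : lam ≠ 0 → ∀ t ∈ Set.Icc 0 T, ∀ x y : Spc n, x ≠ y ∧ ‖x - y‖ ≤ ‖x‖ / 2 →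
      ENNReal.ofReal (wt2 x y ^ (δ + lam) * ‖W t x - W t y‖ / ‖x - y‖ ^ lam) ≤ K)
    (htime : lam ≠ 0 → ∀ t₁ ∈ Set.Icc 0 T, ∀ t₂ ∈ Set.Icc 0 T, t₁ ≠ t₂ → ∀ x,
      ENNReal.ofReal (wt x ^ δ * ‖W t₁ x - W t₂ x‖ / |t₁ - t₂| ^ (lam / 2)) ≤ K) :
    eAniso0 T lam δ W ≤ 5 * K := by
  have hslice : ∀ t ∈ Set.Icc 0 T, eHol0 lam δ (W t) ≤ 4 * K := by
    intro t ht
    have hW : eWSup δ (W t) ≤ K := iSup_le (hsup t ht)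
    rw [eHol0]
    split_ifs with hl
    · exact hW.trans (le_mul_of_one_le_left' (by norm_num))
    · calc eOHold lam (W t) + eWSup δ (W t) + eWHold lam δ (W t) ≤ (K + K) + K + K := by
            gcongr
            · exact add_le_add (iSup₂_le (hball hl t ht))
                (iSup₂_le fun x y => iSup_le (hholder hl t ht x y))
            · exact iSup₂_le fun x y => iSup_le (hweighted hl t ht x y)
        _ = 4 * K := by ring
  rw [eAniso0]
  calc _ ≤ 4 * K + K := by
        gcongr
        · exact iSup_le fun t => hslice t t.2
        · split_ifs with hl
          · exact zero_le
          · exact iSup₂_le fun t₁ t₂ => iSup₂_le fun hne x => htime hl t₁ t₁.2 t₂ t₂.2 hne x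
    _ = 5 * K := by ring

end Quotients

section Weights

lemma wt_pos (x : Spc n) : 0 < wt x := Real.sqrt_pos.2 (by positivity)

lemma wt_rpow_nonneg (x : Spc n) (a : ℝ) : 0 ≤ wt x ^ a := Real.rpow_nonneg (wt_pos x).le a

lemma wt2_rpow_nonneg (x y : Spc n) (a : ℝ) : 0 ≤ wt2 x y ^ a :=
  Real.rpow_nonneg ((wt_pos x).le.trans (le_max_left _ _)) a

lemma one_le_two_rpow_abs_add (a b : ℝ) : 1 ≤ (2 : ℝ) ^ |a| + 2 ^ |b| := by
  linarith [Real.one_le_rpow one_le_two (abs_nonneg a), Real.rpow_nonneg zero_le_two |b|]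

lemma wt_rpow_le_mul (x : Spc n) {a b γ c : ℝ} (h : a + b = γ) (hc : 1 ≤ c) :
    wt x ^ γ ≤ c * (wt x ^ a * wt x ^ b) := by
  rw [← Real.rpow_add (wt_pos x), h]
  exact le_mul_of_one_le_left (wt_rpow_nonneg x γ) hc

lemma wt_le_two_mul_wt {x y : Spc n} (h : ‖y‖ ≤ 2 * ‖x‖) : wt y ≤ 2 * wt x := by
  rw [← pow_le_pow_iff_left₀ (wt_pos y).le (by linarith [wt_pos x]) two_ne_zero, mul_pow, wt,
    wt, Real.sq_sqrt (by positivity : (0 : ℝ) ≤ 1 + ‖y‖ ^ 2),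
    Real.sq_sqrt (by positivity : (0 : ℝ) ≤ 1 + ‖x‖ ^ 2)]
  nlinarith [norm_nonneg y]

lemma rpow_le_two_rpow_abs_mul_rpow {a b : ℝ} (ha : 0 < a) (hab : a ≤ b) (hba : b ≤ 2 * a)
    (γ : ℝ) : b ^ γ ≤ 2 ^ |γ| * a ^ γ := by
  have hba0 : 0 ≤ b / a := div_nonneg (ha.le.trans hab) ha.le
  rw [show b ^ γ = (b / a) ^ γ * a ^ γ by
    rw [← Real.mul_rpow hba0 ha.le, div_mul_cancel₀ _ ha.ne']]
  gcongr
  rcases le_or_gt 0 γ with hγ | hγ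
  · rw [abs_of_nonneg hγ]
    exact Real.rpow_le_rpow hba0 (by rwa [div_le_iff₀ ha]) hγ
  · exact (Real.rpow_le_one_of_one_le_of_nonpos ((one_le_div ha).2 hab) hγ.le).trans
      (Real.one_le_rpow one_le_two (abs_nonneg γ))

lemma wt2_rpow_add_le {x y : Spc n} (h : ‖x - y‖ ≤ ‖x‖ / 2) (a b : ℝ) :
    wt2 x y ^ (a + b) ≤ 2 ^ |b| * (wt2 x y ^ a * wt x ^ b) ∧
      wt2 x y ^ (a + b) ≤ 2 ^ |a| * (wt y ^ a * wt2 x y ^ b) := by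
  have hy : ‖y‖ ≤ 2 * ‖x‖ := by
    linarith [norm_le_norm_add_norm_sub' y x, norm_sub_rev x y, norm_nonneg x]
  have hx : ‖x‖ ≤ 2 * ‖y‖ := by linarith [norm_le_norm_add_norm_sub' x y]
  have hw : 0 < wt2 x y := (wt_pos x).trans_le (le_max_left _ _)
  have hwx : wt2 x y ^ b ≤ 2 ^ |b| * wt x ^ b := rpow_le_two_rpow_abs_mul_rpow (wt_pos x)
    (le_max_left _ _) (max_le (by linarith [wt_pos x]) (wt_le_two_mul_wt hy)) b
  have hwy : wt2 x y ^ a ≤ 2 ^ |a| * wt y ^ a := rpow_le_two_rpow_abs_mul_rpow (wt_pos y)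
    (le_max_right _ _) (max_le (wt_le_two_mul_wt hx) (by linarith [wt_pos y])) a
  rw [Real.rpow_add hw]
  constructor
  · calc wt2 x y ^ a * wt2 x y ^ b ≤ wt2 x y ^ a * (2 ^ |b| * wt x ^ b) := by gcongr
      _ = _ := by ring
  · calc wt2 x y ^ a * wt2 x y ^ b ≤ (2 ^ |a| * wt y ^ a) * wt2 x y ^ b := by gcongr
      _ = _ := by ring

end Weights

section Bilinear

lemma ofReal_mul_le_of_le_sum_mul {ι : Type*} [Fintype ι] {ω X : ℝ} {c α β P Q : ι → ℝ}
    {A B : ℝ≥0∞} (hX : X ≤ ∑ ρ, P ρ * Q ρ) (hω : 0 ≤ ω) (hωc : ∀ ρ, ω ≤ c ρ * (α ρ * β ρ))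
    (hc : 0 ≤ c) (hα : 0 ≤ α) (hP : 0 ≤ P) (hQ : 0 ≤ Q)
    (hA : ∀ ρ, ENNReal.ofReal (α ρ * P ρ) ≤ A) (hB : ∀ ρ, ENNReal.ofReal (β ρ * Q ρ) ≤ B) :
    ENNReal.ofReal (ω * X) ≤ ENNReal.ofReal (∑ ρ, c ρ) * (A * B) := by
  have hreal : ω * X ≤ ∑ ρ, c ρ * ((α ρ * P ρ) * (β ρ * Q ρ)) := by
    refine (mul_le_mul_of_nonneg_left hX hω).trans ?_
    rw [Finset.mul_sum]
    refine Finset.sum_le_sum fun ρ _ => ?_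
    calc ω * (P ρ * Q ρ) ≤ c ρ * (α ρ * β ρ) * (P ρ * Q ρ) :=
          mul_le_mul_of_nonneg_right (hωc ρ) (mul_nonneg (hP ρ) (hQ ρ))
      _ = _ := by ring
  refine (ENNReal.ofReal_le_ofReal hreal).trans ?_
  rw [ENNReal.ofReal_sum_of_nonneg fun ρ _ => hc ρ, Finset.sum_mul]
  refine (Finset.le_sum_of_subadditive _ ENNReal.ofReal_zero.le (fun _ _ => ENNReal.ofReal_add_le)
    _ _).trans (Finset.sum_le_sum fun ρ _ => ?_)
  rw [ENNReal.ofReal_mul (hc ρ), ENNReal.ofReal_mul (mul_nonneg (hα ρ) (hP ρ))]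
  gcongr
  exacts [hA ρ, hB ρ]

lemma ofReal_mul_div_le_of_le_sum {ι : Type*} [Fintype ι] {ω d X : ℝ}
    {c α β α' β' Du nv nu Dv : ι → ℝ} {A B : ℝ≥0∞}
    (hX : X ≤ ∑ ρ, (Du ρ * nv ρ + nu ρ * Dv ρ)) (hω : 0 ≤ ω) (hd : 0 ≤ d)
    (hωc : ∀ ρ, ω ≤ c ρ * (α ρ * β ρ)) (hωc' : ∀ ρ, ω ≤ c ρ * (α' ρ * β' ρ)) (hc : 0 ≤ c)
    (hα : 0 ≤ α) (hα' : 0 ≤ α') (hDu : 0 ≤ Du) (hnv : 0 ≤ nv) (hnu : 0 ≤ nu) (hDv : 0 ≤ Dv)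
    (hA : ∀ ρ, ENNReal.ofReal (α ρ * Du ρ / d) ≤ A) (hB : ∀ ρ, ENNReal.ofReal (β ρ * nv ρ) ≤ B)
    (hA' : ∀ ρ, ENNReal.ofReal (α' ρ * nu ρ) ≤ A)
    (hB' : ∀ ρ, ENNReal.ofReal (β' ρ * Dv ρ / d) ≤ B) :
    ENNReal.ofReal (ω * X / d) ≤ 2 * (ENNReal.ofReal (∑ ρ, c ρ) * (A * B)) := by
  have h₁ := ofReal_mul_le_of_le_sum_mul (X := ∑ ρ, Du ρ / d * nv ρ) le_rfl hω hωc hc hα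
    (fun ρ => div_nonneg (hDu ρ) hd) hnv (fun ρ => by rw [← mul_div_assoc]; exact hA ρ) hB
  have h₂ := ofReal_mul_le_of_le_sum_mul (X := ∑ ρ, nu ρ * (Dv ρ / d)) le_rfl hω hωc' hc hα'
    hnu (fun ρ => div_nonneg (hDv ρ) hd) hA' (fun ρ => by rw [← mul_div_assoc]; exact hB' ρ)
  have hreal : ω * X / d ≤ ω * ∑ ρ, Du ρ / d * nv ρ + ω * ∑ ρ, nu ρ * (Dv ρ / d) :=
    calc ω * X / d ≤ ω * (∑ ρ, (Du ρ * nv ρ + nu ρ * Dv ρ)) / d := by gcongr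
      _ = _ := by
        rw [mul_div_assoc, Finset.sum_div, ← mul_add, ← Finset.sum_add_distrib]
        exact congrArg _ (Finset.sum_congr rfl fun ρ _ => by ring)
  calc ENNReal.ofReal (ω * X / d)
      ≤ ENNReal.ofReal (ω * ∑ ρ, Du ρ / d * nv ρ) + ENNReal.ofReal (ω * ∑ ρ, nu ρ * (Dv ρ / d)) :=
        (ENNReal.ofReal_le_ofReal hreal).trans ENNReal.ofReal_add_le
    _ ≤ _ := (add_le_add h₁ h₂).trans_eq (two_mul _).symm

end Bilinear

section ProductEstimate

variable {F : Type*} [NormedAddCommGroup F] {ι : Type*} [Fintype ι] {G H : ι → Type*}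
  [∀ ρ, NormedAddCommGroup (G ρ)] [∀ ρ, NormedAddCommGroup (H ρ)]

variable {T lam γ : ℝ} {δ δ' : ι → ℝ} {W : ℝ → Spc n → F} {U : ∀ ρ, ℝ → Spc n → G ρ}
  {V : ∀ ρ, ℝ → Spc n → H ρ} {A B : ℝ≥0∞}

namespace LeibnizBound

lemma ofReal_wt_rpow_mul_norm_le (h : LeibnizBound T W U V) (hγ : ∀ ρ, δ ρ + δ' ρ = γ)
    (hU : ∀ ρ, eAniso0 T lam (δ ρ) (U ρ) ≤ A) (hV : ∀ ρ, eAniso0 T lam (δ' ρ) (V ρ) ≤ B)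
    {t : ℝ} (ht : t ∈ Set.Icc 0 T) (x : Spc n) :
    ENNReal.ofReal (wt x ^ γ * ‖W t x‖) ≤
      ENNReal.ofReal (∑ ρ, (2 ^ |δ ρ| + 2 ^ |δ' ρ|)) * (A * B) :=
  ofReal_mul_le_of_le_sum_mul (α := fun ρ => wt x ^ δ ρ) (β := fun ρ => wt x ^ δ' ρ)
    (h.1 t ht x) (wt_rpow_nonneg x γ)
    (fun ρ => wt_rpow_le_mul x (hγ ρ) (one_le_two_rpow_abs_add _ _))
    (fun ρ => by positivity) (fun ρ => wt_rpow_nonneg x _) (fun ρ => norm_nonneg _)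
    (fun ρ => norm_nonneg _) (fun ρ => (ofReal_wt_rpow_mul_norm_le_eAniso0 ht x).trans (hU ρ))
    (fun ρ => (ofReal_wt_rpow_mul_norm_le_eAniso0 ht x).trans (hV ρ))

lemma ofReal_norm_le (h : LeibnizBound T W U V)
    (hU : ∀ ρ, eAniso0 T lam (δ ρ) (U ρ) ≤ A) (hV : ∀ ρ, eAniso0 T lam (δ' ρ) (V ρ) ≤ B)
    (hl : lam ≠ 0) {t : ℝ} (ht : t ∈ Set.Icc 0 T) {x : Spc n} (hx : ‖x‖ ≤ 1) :
    ENNReal.ofReal ‖W t x‖ ≤ ENNReal.ofReal (∑ ρ, (2 ^ |δ ρ| + 2 ^ |δ' ρ|)) * (A * B) := by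
  rw [← one_mul ‖W t x‖]
  refine ofReal_mul_le_of_le_sum_mul (α := 1) (β := 1) (h.1 t ht x) zero_le_one
    (fun ρ => by simpa using one_le_two_rpow_abs_add (δ ρ) (δ' ρ)) (fun ρ => by positivity)
    zero_le_one (fun ρ => norm_nonneg _) (fun ρ => norm_nonneg _) (fun ρ => ?_) (fun ρ => ?_)
  · simpa using (ofReal_norm_le_eAniso0 hl ht hx).trans (hU ρ)
  · simpa using (ofReal_norm_le_eAniso0 hl ht hx).trans (hV ρ)

lemma ofReal_holderQuot_le (h : LeibnizBound T W U V)
    (hU : ∀ ρ, eAniso0 T lam (δ ρ) (U ρ) ≤ A) (hV : ∀ ρ, eAniso0 T lam (δ' ρ) (V ρ) ≤ B)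
    (hl : lam ≠ 0) {t : ℝ} (ht : t ∈ Set.Icc 0 T) {x y : Spc n}
    (hxy : ‖x‖ ≤ 1 ∧ ‖y‖ ≤ 1 ∧ x ≠ y) :
    ENNReal.ofReal (‖W t x - W t y‖ / ‖x - y‖ ^ lam) ≤
      2 * (ENNReal.ofReal (∑ ρ, (2 ^ |δ ρ| + 2 ^ |δ' ρ|)) * (A * B)) := by
  have hc : ∀ ρ, (1 : ℝ) ≤ (2 ^ |δ ρ| + 2 ^ |δ' ρ|) * (1 * 1) := fun ρ => by
    simpa using one_le_two_rpow_abs_add (δ ρ) (δ' ρ)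
  rw [← one_mul ‖W t x - W t y‖]
  refine ofReal_mul_div_le_of_le_sum (α := 1) (β := 1) (α' := 1) (β' := 1) (h.2 t ht t ht x y)
    zero_le_one (by positivity) hc hc (fun ρ => by positivity) zero_le_one zero_le_one
    (fun ρ => norm_nonneg _) (fun ρ => norm_nonneg _) (fun ρ => norm_nonneg _)
    (fun ρ => norm_nonneg _) (fun ρ => ?_) (fun ρ => ?_) (fun ρ => ?_) (fun ρ => ?_)
  · simpa using (ofReal_holderQuot_le_eAniso0 hl ht hxy).trans (hU ρ)
  · simpa using (ofReal_norm_le_eAniso0 hl ht hxy.1).trans (hV ρ)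
  · simpa using (ofReal_norm_le_eAniso0 hl ht hxy.2.1).trans (hU ρ)
  · simpa using (ofReal_holderQuot_le_eAniso0 hl ht hxy).trans (hV ρ)

lemma ofReal_weightedHolderQuot_le (h : LeibnizBound T W U V) (hγ : ∀ ρ, δ ρ + δ' ρ = γ)
    (hU : ∀ ρ, eAniso0 T lam (δ ρ) (U ρ) ≤ A) (hV : ∀ ρ, eAniso0 T lam (δ' ρ) (V ρ) ≤ B)
    (hl : lam ≠ 0) {t : ℝ} (ht : t ∈ Set.Icc 0 T) {x y : Spc n}
    (hxy : x ≠ y ∧ ‖x - y‖ ≤ ‖x‖ / 2) :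
    ENNReal.ofReal (wt2 x y ^ (γ + lam) * ‖W t x - W t y‖ / ‖x - y‖ ^ lam) ≤
      2 * (ENNReal.ofReal (∑ ρ, (2 ^ |δ ρ| + 2 ^ |δ' ρ|)) * (A * B)) := by
  refine ofReal_mul_div_le_of_le_sum (α := fun ρ => wt2 x y ^ (δ ρ + lam))
    (β := fun ρ => wt x ^ δ' ρ) (α' := fun ρ => wt y ^ δ ρ)
    (β' := fun ρ => wt2 x y ^ (δ' ρ + lam)) (h.2 t ht t ht x y) (wt2_rpow_nonneg x y _)
    (by positivity) (fun ρ => ?_) (fun ρ => ?_) (fun ρ => by positivity)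
    (fun ρ => wt2_rpow_nonneg x y _) (fun ρ => wt_rpow_nonneg y _) (fun ρ => norm_nonneg _)
    (fun ρ => norm_nonneg _) (fun ρ => norm_nonneg _) (fun ρ => norm_nonneg _)
    (fun ρ => (ofReal_weightedHolderQuot_le_eAniso0 hl ht hxy).trans (hU ρ))
    (fun ρ => (ofReal_wt_rpow_mul_norm_le_eAniso0 ht x).trans (hV ρ))
    (fun ρ => (ofReal_wt_rpow_mul_norm_le_eAniso0 ht y).trans (hU ρ))
    (fun ρ => (ofReal_weightedHolderQuot_le_eAniso0 hl ht hxy).trans (hV ρ))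
  · rw [← hγ ρ, add_right_comm]
    refine (wt2_rpow_add_le hxy.2 _ _).1.trans (mul_le_mul_of_nonneg_right ?_
      (mul_nonneg (wt2_rpow_nonneg x y _) (wt_rpow_nonneg x _)))
    exact le_add_of_nonneg_left (by positivity)
  · rw [← hγ ρ, add_assoc]
    refine (wt2_rpow_add_le hxy.2 _ _).2.trans (mul_le_mul_of_nonneg_right ?_
      (mul_nonneg (wt_rpow_nonneg y _) (wt2_rpow_nonneg x y _)))
    exact le_add_of_nonneg_right (by positivity)

lemma ofReal_timeHolderQuot_le (h : LeibnizBound T W U V) (hγ : ∀ ρ, δ ρ + δ' ρ = γ)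
    (hU : ∀ ρ, eAniso0 T lam (δ ρ) (U ρ) ≤ A) (hV : ∀ ρ, eAniso0 T lam (δ' ρ) (V ρ) ≤ B)
    (hl : lam ≠ 0) {t₁ t₂ : ℝ} (h₁ : t₁ ∈ Set.Icc 0 T) (h₂ : t₂ ∈ Set.Icc 0 T) (hne : t₁ ≠ t₂)
    (x : Spc n) :
    ENNReal.ofReal (wt x ^ γ * ‖W t₁ x - W t₂ x‖ / |t₁ - t₂| ^ (lam / 2)) ≤
      2 * (ENNReal.ofReal (∑ ρ, (2 ^ |δ ρ| + 2 ^ |δ' ρ|)) * (A * B)) :=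
  have hc : ∀ ρ, wt x ^ γ ≤ (2 ^ |δ ρ| + 2 ^ |δ' ρ|) * (wt x ^ δ ρ * wt x ^ δ' ρ) :=
    fun ρ => wt_rpow_le_mul x (hγ ρ) (one_le_two_rpow_abs_add _ _)
  ofReal_mul_div_le_of_le_sum (h.2 t₁ h₁ t₂ h₂ x x) (wt_rpow_nonneg x γ) (by positivity) hc hc
    (fun ρ => by positivity) (fun ρ => wt_rpow_nonneg x _) (fun ρ => wt_rpow_nonneg x _)
    (fun ρ => norm_nonneg _) (fun ρ => norm_nonneg _) (fun ρ => norm_nonneg _)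
    (fun ρ => norm_nonneg _)
    (fun ρ => (ofReal_timeHolderQuot_le_eAniso0 hl h₁ h₂ hne x).trans (hU ρ))
    (fun ρ => (ofReal_wt_rpow_mul_norm_le_eAniso0 h₁ x).trans (hV ρ))
    (fun ρ => (ofReal_wt_rpow_mul_norm_le_eAniso0 h₂ x).trans (hU ρ))
    (fun ρ => (ofReal_timeHolderQuot_le_eAniso0 hl h₁ h₂ hne x).trans (hV ρ))

lemma eAniso0_le (h : LeibnizBound T W U V) (hγ : ∀ ρ, δ ρ + δ' ρ = γ)
    (hU : ∀ ρ, eAniso0 T lam (δ ρ) (U ρ) ≤ A) (hV : ∀ ρ, eAniso0 T lam (δ' ρ) (V ρ) ≤ B) :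
    eAniso0 T lam γ W ≤ 10 * (ENNReal.ofReal (∑ ρ, (2 ^ |δ ρ| + 2 ^ |δ' ρ|)) * (A * B)) := by
  have hle2 : ∀ X : ℝ≥0∞, X ≤ 2 * X := fun X => le_mul_of_one_le_left' one_le_two
  refine (eAniso0_le_of_forall
    (fun t ht x => (h.ofReal_wt_rpow_mul_norm_le hγ hU hV ht x).trans (hle2 _))
    (fun hl t ht x hx => (h.ofReal_norm_le hU hV hl ht hx).trans (hle2 _))
    (fun hl t ht x y hxy => h.ofReal_holderQuot_le hU hV hl ht hxy)
    (fun hl t ht x y hxy => h.ofReal_weightedHolderQuot_le hγ hU hV hl ht hxy)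
    (fun hl t₁ h₁ t₂ h₂ hne x => h.ofReal_timeHolderQuot_le hγ hU hV hl h₁ h₂ hne x)).trans_eq ?_
  ring

end LeibnizBound

end ProductEstimate

lemma eAniso0_mixDeriv_le_eAnisoKS {T lam γ : ℝ} {k s : ℕ} (w : ℝ → Spc n → ℝ) {a i : ℕ}
    (hi : i ≤ s) (hai : a + 2 * i ≤ 2 * s + k) :
    eAniso0 T lam (γ + a) (mixDeriv T a i w) ≤ eAnisoKS T k s lam γ w := by
  obtain ⟨b, m, hb, hm, rfl⟩ : ∃ b m : ℕ, b ≤ k ∧ m + 2 * i ≤ 2 * s ∧ b + m = a :=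
    ⟨a - min a (2 * s - 2 * i), min a (2 * s - 2 * i), by omega, by omega, by omega⟩
  rw [show γ + ((b + m : ℕ) : ℝ) = γ + b + m by push_cast; ring]
  calc eAniso0 T lam (γ + b + m) (mixDeriv T (b + m) i w)
      = if m + 2 * i ≤ 2 * s then eAniso0 T lam (γ + b + m) (mixDeriv T (b + m) i w) else 0 :=
        (if_pos hm).symm
    _ ≤ ∑ j ∈ Finset.range (s + 1),
          if m + 2 * j ≤ 2 * s then eAniso0 T lam (γ + b + m) (mixDeriv T (b + m) j w) else 0 :=
        Finset.single_le_sum (f := fun j => if m + 2 * j ≤ 2 * s then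
          eAniso0 T lam (γ + b + m) (mixDeriv T (b + m) j w) else 0)
          (fun _ _ => zero_le) (Finset.mem_range.2 (by omega))
    _ ≤ ∑ m' ∈ Finset.range (2 * s + 1), ∑ j ∈ Finset.range (s + 1),
          if m' + 2 * j ≤ 2 * s then eAniso0 T lam (γ + b + m') (mixDeriv T (b + m') j w) else 0 :=
        Finset.single_le_sum (f := fun m' => ∑ j ∈ Finset.range (s + 1),
          if m' + 2 * j ≤ 2 * s then eAniso0 T lam (γ + b + m') (mixDeriv T (b + m') j w) else 0)
          (fun _ _ => zero_le) (Finset.mem_range.2 (by omega))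
    _ ≤ eAnisoKS T k s lam γ w :=
        Finset.single_le_sum (f := fun b' : ℕ => ∑ m' ∈ Finset.range (2 * s + 1),
          ∑ j ∈ Finset.range (s + 1), if m' + 2 * j ≤ 2 * s then
            eAniso0 T lam (γ + b' + m') (mixDeriv T (b' + m') j w) else 0)
          (fun _ _ => zero_le) (Finset.mem_range.2 (by omega))

lemma exists_eAniso0_mixDeriv_mul_le {T : ℝ} {k s : ℕ} (hT : 0 < T) (lam δ δ' : ℝ) {b m j : ℕ}
    (hb : b ≤ k) (hmj : m + 2 * j ≤ 2 * s) :
    ∃ C : NNReal, ∀ u v : ℝ → Spc n → ℝ, AnisoReg T k s u → AnisoReg T k s v →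
      eAniso0 T lam (δ + δ' + b + m) (mixDeriv T (b + m) j (u * v)) ≤
        C * (eAnisoKS T k s lam δ u * eAnisoKS T k s lam δ' v) := by
  obtain ⟨ι, _, au, av, iu, iv, hsum, hbound⟩ :=
    exists_leibnizBound_mixDeriv_mul (n := n) (k := k) (s := s) hT (M := b + m) (j := j)
      (by omega) (by omega)
  refine ⟨10 * (∑ ρ, ((2 : ℝ) ^ |δ + au ρ| + 2 ^ |δ' + av ρ|)).toNNReal, fun u v hu hv => ?_⟩
  have hγ : ∀ ρ, δ + au ρ + (δ' + av ρ) = δ + δ' + b + m := fun ρ => by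
    have : (au ρ : ℝ) + av ρ = b + m := by exact_mod_cast (hsum ρ).1
    linarith
  refine ((hbound u v hu hv).eAniso0_le hγ
    (fun ρ => eAniso0_mixDeriv_le_eAnisoKS (k := k) (s := s) u
      (by have := hsum ρ; omega) (by have := hsum ρ; omega))
    (fun ρ => eAniso0_mixDeriv_le_eAnisoKS (k := k) (s := s) v
      (by have := hsum ρ; omega) (by have := hsum ρ; omega))).trans_eq ?_
  rw [ENNReal.coe_mul, ENNReal.coe_ofNat, mul_assoc]
  rfl

lemma exists_sum_le_mul {ι α : Type*} (s : Finset ι) {f : ι → α → ℝ≥0∞} {g : α → ℝ≥0∞}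
    {p : α → Prop} (h : ∀ i ∈ s, ∃ C : NNReal, ∀ a, p a → f i a ≤ C * g a) :
    ∃ C : NNReal, ∀ a, p a → ∑ i ∈ s, f i a ≤ C * g a := by
  choose! C hC using h
  exact ⟨∑ i ∈ s, C i, fun a ha => (Finset.sum_le_sum fun i hi => hC i hi a ha).trans_eq
    (by rw [ENNReal.ofNNReal_finsetSum, Finset.sum_mul])⟩

lemma exists_eAnisoKS_mul_le {T : ℝ} {k s : ℕ} (hT : 0 < T) (lam δ δ' : ℝ) :
    ∃ C : NNReal, ∀ u v : ℝ → Spc n → ℝ, AnisoReg T k s u → AnisoReg T k s v →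
      eAnisoKS T k s lam (δ + δ') (u * v) ≤
        C * (eAnisoKS T k s lam δ u * eAnisoKS T k s lam δ' v) := by
  suffices h : ∃ C : NNReal, ∀ w : (ℝ → Spc n → ℝ) × (ℝ → Spc n → ℝ),
      AnisoReg T k s w.1 ∧ AnisoReg T k s w.2 → eAnisoKS T k s lam (δ + δ') (w.1 * w.2) ≤
        C * (eAnisoKS T k s lam δ w.1 * eAnisoKS T k s lam δ' w.2) by
    obtain ⟨C, hC⟩ := h
    exact ⟨C, fun u v hu hv => hC (u, v) ⟨hu, hv⟩⟩
  refine exists_sum_le_mul _ fun b hb => exists_sum_le_mul _ fun m _ =>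
    exists_sum_le_mul _ fun j _ => ?_
  by_cases hmj : m + 2 * j ≤ 2 * s
  · obtain ⟨C, hC⟩ := exists_eAniso0_mixDeriv_mul_le (n := n) hT lam δ δ'
      (Nat.lt_succ_iff.1 (Finset.mem_range.1 hb)) hmj
    exact ⟨C, fun w hw => by rw [if_pos hmj]; exact hC _ _ hw.1 hw.2⟩
  · exact ⟨0, fun w _ => by rw [if_neg hmj]; exact zero_le⟩

theorem stmt3_general (n : ℕ) (s k : ℕ) (lam δ δ' T : ℝ)
    (hT : 0 < T) :
    ∃ c : ℝ, 0 < c ∧ ∀ u v : ℝ → Spc n → ℝ,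
      AnisoMem T k s lam δ u → AnisoMem T k s lam δ' v →
      AnisoMem T k s lam (δ + δ') (u * v) ∧
        eAnisoKS T k s lam (δ + δ') (u * v) ≤
          ENNReal.ofReal c * (eAnisoKS T k s lam δ u * eAnisoKS T k s lam δ' v) := by
  obtain ⟨C, hC⟩ := exists_eAnisoKS_mul_le (n := n) (k := k) (s := s) hT lam δ δ'
  refine ⟨C + 1, by positivity, fun u v hu hv => ?_⟩
  have hCc : (C : ℝ≥0∞) ≤ ENNReal.ofReal (C + 1) :=
    ENNReal.ofReal_coe_nnreal.symm.le.trans (ENNReal.ofReal_le_ofReal (by linarith))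
  have hbound := (hC u v hu.1 hv.1).trans (mul_le_mul_left hCc _)
  exact ⟨⟨AnisoReg.mul hT hu.1 hv.1, ne_top_of_le_ne_top
    (ENNReal.mul_ne_top ENNReal.ofReal_ne_top (ENNReal.mul_ne_top hu.2 hv.2)) hbound⟩, hbound⟩

/-- multiplication `C^{k,𝐬(s,λ,δ)}_T × C^{k,𝐬(s,λ,δ')}_T → C^{k,𝐬(s,λ,δ+δ')}_T`. -/
theorem stmt3 (n : ℕ) (s k : ℕ) (lam δ δ' T : ℝ)
    (hlam : lam ∈ Set.Icc (0 : ℝ) 1) (hT : 0 < T) :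
    ∃ c : ℝ, 0 < c ∧ ∀ u v : ℝ → Spc n → ℝ,
      AnisoMem T k s lam δ u → AnisoMem T k s lam δ' v →
      AnisoMem T k s lam (δ + δ') (u * v) ∧
        eAnisoKS T k s lam (δ + δ') (u * v) ≤
          ENNReal.ofReal c * (eAnisoKS T k s lam δ u * eAnisoKS T k s lam δ' v) :=
  stmt3_general n s k lam δ δ' T hT
end NSdeRham

end
end

section
/- Let n ≥ 2, 0 ≤ q ≤ n, δ > n/2, μ > 0, T > 0, and let w be a q-form on ℝⁿ×[0,T] with ‖w‖_{C^{0,s(0,0,δ)}_{T,Λ^q}} < ∞ and ‖∇w‖_{C^{0,s(0,0,δ+1)}_{T,Λ^q}} < ∞. Then there exist constants c_q^{(1)}, c_q^{(2)} > 0, independent of t, u and w, such that for every sufficiently regular q-form u on ℝⁿ×[0,T] with u(·,t) and ∇u(·,t) in L² for each t, and for all t ∈ [0,T]: |(B_q(w,u)(·,t), u(·,t))_{L²_{Λ^q}(ℝⁿ)}| ≤ (μ/2)‖∇u(·,t)‖²_{L²_{Λ^q}(ℝⁿ)} + ( (2(c_q^{(2)})²/μ)‖w‖²_{C^{0,s(0,0,δ)}_{T,Λ^q}}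 + c_q^{(1)}‖∇w‖_{C^{0,s(0,0,δ+1)}_{T,Λ^q}} ) ‖u(·,t)‖²_{L²_{Λ^q}(ℝⁿ)}. -/
open scoped BigOperators ENNReal Classical
open Filter MeasureTheory

noncomputable section

namespace NSdeRham

variable {n : ℕ}

/-! Pointwise, `B_q(w,u)` is bilinear and of first order, and the weights `(1+|x|²)^{σ/2}` are
at least `1`, so each coefficient of `B_q(w,u)(·,t)` is bounded by
`a ‖w‖ |∇u| + b ‖∇w‖ |u|` with the weighted sup norms of `w`. Pairing with `u`, the product
`|∇u| |u|` is split by Young's inequality with the weight chosen to produce `μ/2 ‖∇u‖²`; everything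
else is a multiple of `‖u‖²`. -/

section

variable {q k : ℕ}

lemma one_le_wt (x : Spc n) : 1 ≤ wt x :=
  Real.one_le_sqrt.2 (le_add_of_nonneg_right (sq_nonneg _))

lemma abs_le_toReal_of_ofReal_wt_rpow_mul_le {δ a : ℝ} {E : ℝ≥0∞} {x : Spc n} (hδ : 0 ≤ δ)
    (hE : E ≠ ⊤) (h : ENNReal.ofReal (wt x ^ δ * |a|) ≤ E) : |a| ≤ E.toReal :=
  (le_mul_of_one_le_left (abs_nonneg a) (Real.one_le_rpow (one_le_wt x) hδ)).trans
    ((ENNReal.ofReal_le_iff_le_toReal hE).1 h)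

lemma abs_le_toReal_eSupT {T δ t : ℝ} (hδ : 0 ≤ δ) {w : FormT n q} (hw : eSupT T δ w ≠ ⊤)
    (I : Idx n q) (ht : t ∈ Set.Icc 0 T) (x : Spc n) : |w I t x| ≤ (eSupT T δ w).toReal := by
  refine abs_le_toReal_of_ofReal_wt_rpow_mul_le (x := x) hδ hw ?_
  refine le_trans ?_ (Finset.single_le_sum (f := fun I : Idx n q => ⨆ (s : Set.Icc (0 : ℝ) T)
    (y : Spc n), ENNReal.ofReal (wt y ^ δ * |w I s y|)) (fun _ _ => zero_le) (Finset.mem_univ I))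
  exact le_iSup₂ (f := fun (s : Set.Icc (0 : ℝ) T) (y : Spc n) =>
    ENNReal.ofReal (wt y ^ δ * |w I s y|)) ⟨t, ht⟩ x

lemma abs_pd_le_toReal_eSupGradT {T δ t : ℝ} (hδ : 0 ≤ δ) {w : FormT n q}
    (hw : eSupGradT T δ w ≠ ⊤) (I : Idx n q) (i : Fin n) (ht : t ∈ Set.Icc 0 T) (x : Spc n) :
    |pd i (fun y => w I t y) x| ≤ (eSupGradT T δ w).toReal := by
  refine abs_le_toReal_of_ofReal_wt_rpow_mul_le (x := x) hδ hw ?_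
  refine le_trans ?_ (Finset.single_le_sum (f := fun I : Idx n q => ∑ i : Fin n,
    ⨆ (s : Set.Icc (0 : ℝ) T) (y : Spc n), ENNReal.ofReal (wt y ^ δ * |pd i (fun z => w I s z) y|))
    (fun _ _ => zero_le) (Finset.mem_univ I))
  refine le_trans ?_ (Finset.single_le_sum (f := fun i : Fin n =>
    ⨆ (s : Set.Icc (0 : ℝ) T) (y : Spc n), ENNReal.ofReal (wt y ^ δ * |pd i (fun z => w I s z) y|))
    (fun _ _ => zero_le) (Finset.mem_univ i))
  exact le_iSup₂ (f := fun (s : Set.Icc (0 : ℝ) T) (y : Spc n) =>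
    ENNReal.ofReal (wt y ^ δ * |pd i (fun z => w I s z) y|)) ⟨t, ht⟩ x

def absSum (v : FormS n k) (x : Spc n) : ℝ := ∑ I, |v I x|

def gradAbsSum (v : FormS n k) (x : Spc n) : ℝ := ∑ I, ∑ i, |pd i (v I) x|

lemma gradAbsSum_nonneg (v : FormS n k) (x : Spc n) : 0 ≤ gradAbsSum v x := by
  unfold gradAbsSum; positivity

lemma absSum_nonneg (v : FormS n k) (x : Spc n) : 0 ≤ absSum v x := by
  unfold absSum; positivity

lemma abs_le_absSum (v : FormS n k) (I : Idx n k) (x : Spc n) : |v I x| ≤ absSum v x :=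
  Finset.single_le_sum (f := fun I => |v I x|) (fun _ _ => abs_nonneg _) (Finset.mem_univ I)

lemma abs_pd_le_gradAbsSum (v : FormS n k) (I : Idx n k) (i : Fin n) (x : Spc n) :
    |pd i (v I) x| ≤ gradAbsSum v x :=
  (Finset.single_le_sum (f := fun i => |pd i (v I) x|) (fun _ _ => abs_nonneg _)
    (Finset.mem_univ i)).trans
  (Finset.single_le_sum (f := fun I => ∑ i, |pd i (v I) x|) (fun _ _ => by positivity)
    (Finset.mem_univ I))

lemma abs_sum_dite_signed_pd_le (v : FormS n k) (P : Fin n → Prop) [DecidablePred P]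
    (idx : ∀ i, P i → Idx n k) (m : Fin n → ℕ) (x : Spc n) :
    |∑ i, if h : P i then (-1 : ℝ) ^ m i * pd i (v (idx i h)) x else 0| ≤ gradAbsSum v x := by
  refine (Finset.abs_sum_le_sum_abs _ _).trans ?_
  rw [gradAbsSum, Finset.sum_comm]
  refine Finset.sum_le_sum fun i _ => ?_
  split_ifs with h
  · rw [abs_mul, abs_pow, abs_neg, abs_one, one_pow, one_mul]
    exact Finset.single_le_sum (f := fun I => |pd i (v I) x|) (fun _ _ => abs_nonneg _)
      (Finset.mem_univ _)
  · rw [abs_zero]; positivity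

lemma abs_dS_le_gradAbsSum (v : FormS n q) (J : Idx n (q + 1)) (x : Spc n) :
    |dS v J x| ≤ gradAbsSum v x :=
  abs_sum_dite_signed_pd_le v _ _ _ x

lemma abs_dLowS_le_gradAbsSum (p : FormS n (q - 1)) (J : Idx n q) (x : Spc n) :
    |dLowS p J x| ≤ gradAbsSum p x :=
  abs_sum_dite_signed_pd_le p _ _ _ x

lemma abs_coDS_le_gradAbsSum (v : FormS n q) (K : Idx n (q - 1)) (x : Spc n) :
    |coDS v K x| ≤ gradAbsSum v x := by
  rw [coDS, abs_neg]
  exact abs_sum_dite_signed_pd_le v _ _ _ x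

lemma norm_fib_le_absSum (u : FormT n q) (t : ℝ) (x : Spc n) :
    ‖fib u t x‖ ≤ absSum (fun I => u I t) x :=
  (pi_norm_le_iff_of_nonneg (absSum_nonneg _ x)).2 fun I =>
    abs_le_absSum (fun I => u I t) I x

lemma norm_ddFib_le_gradAbsSum (u : FormT n q) (t : ℝ) (x : Spc n) :
    ‖ddFib u t x‖ ≤ gradAbsSum (fun I => u I t) x :=
  norm_prod_le_iff.2
    ⟨(pi_norm_le_iff_of_nonneg (gradAbsSum_nonneg _ x)).2 fun J =>
        (Real.norm_eq_abs _).trans_le (abs_dS_le_gradAbsSum (fun I => u I t) J x),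
      (pi_norm_le_iff_of_nonneg (gradAbsSum_nonneg _ x)).2 fun K =>
        (Real.norm_eq_abs _).trans_le (abs_coDS_le_gradAbsSum (fun I => u I t) K x)⟩

lemma norm_fderiv_single_le {ι : Type*} [Fintype ι] {g : Spc n → ι → ℝ} {x : Spc n}
    (hg : ∀ a, DifferentiableAt ℝ (fun y => g y a) x) (i : Fin n) {r : ℝ} (hr : 0 ≤ r)
    (h : ∀ a, |pd i (fun y => g y a) x| ≤ r) :
    ‖fderiv ℝ g x (EuclideanSpace.single i 1)‖ ≤ r := by
  refine (pi_norm_le_iff_of_nonneg hr).2 fun a => ?_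
  rw [show g = fun y a => g y a from rfl, fderiv_pi hg]
  exact h a

def LinearMap.toContinuous₂ {E F G : Type*} [NormedAddCommGroup E] [NormedSpace ℝ E]
    [FiniteDimensional ℝ E] [NormedAddCommGroup F] [NormedSpace ℝ F] [FiniteDimensional ℝ F]
    [NormedAddCommGroup G] [NormedSpace ℝ G] (M : E →ₗ[ℝ] F →ₗ[ℝ] G) : E →L[ℝ] F →L[ℝ] G :=
  LinearMap.toContinuousLinearMap (LinearMap.toContinuousLinearMap.toLinearMap ∘ₗ M)

lemma abs_apply_le_norm_mul {E F ι : Type*} [NormedAddCommGroup E] [NormedSpace ℝ E]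
    [NormedAddCommGroup F] [NormedSpace ℝ F] [Fintype ι] (B : E →L[ℝ] F →L[ℝ] (ι → ℝ))
    (a : E) (b : F) (K : ι) : |B a b K| ≤ ‖B‖ * ‖a‖ * ‖b‖ :=
  (norm_le_pi_norm (f := B a b) K).trans (B.le_opNorm₂ a b)

lemma abs_pd_bilinear_le {E F ι : Type*} [NormedAddCommGroup E] [NormedSpace ℝ E]
    [NormedAddCommGroup F] [NormedSpace ℝ F] [Fintype ι] (B : E →L[ℝ] F →L[ℝ] (ι → ℝ))
    {g : Spc n → E} {h : Spc n → F} {x : Spc n} (hg : DifferentiableAt ℝ g x)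
    (hh : DifferentiableAt ℝ h x) (i : Fin n) (K : ι) :
    |pd i (fun y => B (g y) (h y) K) x| ≤
      ‖B‖ * (‖g x‖ * ‖fderiv ℝ h x (EuclideanSpace.single i 1)‖ +
        ‖fderiv ℝ g x (EuclideanSpace.single i 1)‖ * ‖h x‖) := by
  have hB : DifferentiableAt ℝ (fun y => B (g y) (h y)) x :=
    (B.hasFDerivAt_of_bilinear hg.hasFDerivAt hh.hasFDerivAt).differentiableAt
  rw [pd, fderiv_apply hB K, B.fderiv_of_bilinear hg hh]
  simp only [ContinuousLinearMap.comp_apply, add_apply, ContinuousLinearMap.precompR_apply,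
    ContinuousLinearMap.precompL_apply, ContinuousLinearMap.compL_apply,
    ContinuousLinearMap.proj_apply, Pi.add_apply]
  rw [mul_add, ← mul_assoc, ← mul_assoc]
  exact (abs_add_le _ _).trans (add_le_add (abs_apply_le_norm_mul B _ _ K)
    (abs_apply_le_norm_mul B _ _ K))

lemma gradAbsSum_le (v : FormS n k) (x : Spc n) {r : ℝ} (h : ∀ I i, |pd i (v I) x| ≤ r) :
    gradAbsSum v x ≤ Fintype.card (Idx n k) * n * r := by
  calc gradAbsSum v x ≤ ∑ _I : Idx n k, ∑ _i : Fin n, r :=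
        Finset.sum_le_sum fun I _ => Finset.sum_le_sum fun i _ => h I i
    _ = Fintype.card (Idx n k) * n * r := by simp [mul_assoc]

section Bop

variable (M₁ : M1Type n q) (M₂ : M2Type n q) {w u : FormT n q} {t A B : ℝ}

lemma abs_Wop_le (hA : 0 ≤ A) (hw : ∀ I x, |w I t x| ≤ A) (hdw : ∀ I i x, |pd i (w I t) x| ≤ B)
    (I : Idx n q) (x : Spc n) :
    |Wop M₁ w u I t x| ≤ ‖LinearMap.toContinuous₂ M₁‖ * A * gradAbsSum (fun I => u I t) x +
      ‖LinearMap.toContinuous₂ M₁‖ * (Fintype.card (Idx n q) * n * B) *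
        absSum (fun I => u I t) x := by
  have hfw : ‖fib w t x‖ ≤ A := (pi_norm_le_iff_of_nonneg hA).2 fun I => hw I x
  have hddw : ‖ddFib w t x‖ ≤ Fintype.card (Idx n q) * n * B :=
    (norm_ddFib_le_gradAbsSum w t x).trans (gradAbsSum_le _ x fun I i => hdw I i x)
  refine (abs_add_le _ _).trans (add_le_add ?_ ?_)
  · refine (abs_apply_le_norm_mul (LinearMap.toContinuous₂ M₁) _ _ I).trans ?_
    rw [mul_right_comm]
    gcongr
    exact norm_ddFib_le_gradAbsSum u t x
  · refine (abs_apply_le_norm_mul (LinearMap.toContinuous₂ M₁) _ _ I).trans ?_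
    have := (norm_nonneg _).trans hddw
    gcongr
    exact norm_fib_le_absSum u t x

lemma abs_dLowT_sym_le (hA : 0 ≤ A) (hB : 0 ≤ B) (hwd : ∀ I, Differentiable ℝ (w I t))
    (hud : ∀ I, Differentiable ℝ (u I t)) (hw : ∀ I x, |w I t x| ≤ A)
    (hdw : ∀ I i x, |pd i (w I t) x| ≤ B) (I : Idx n q) (x : Spc n) :
    |dLowT (fun K t' x' =>
        M₂ (fib u t' x') (fib w t' x') K + M₂ (fib w t' x') (fib u t' x') K) I t x| ≤
      Fintype.card (Idx n (q - 1)) * n * (‖LinearMap.toContinuous₂ (M₂ + M₂.flip)‖ *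
        (absSum (fun I => u I t) x * B + gradAbsSum (fun I => u I t) x * A)) := by
  -- `M₂(u,w) + M₂(w,u)` is the single bilinear map `M₂ + M₂.flip` applied to `(u,w)`.
  set S := LinearMap.toContinuous₂ (M₂ + M₂.flip)
  have hfu : ‖fib u t x‖ ≤ absSum (fun I => u I t) x := norm_fib_le_absSum u t x
  have hfw : ‖fib w t x‖ ≤ A := (pi_norm_le_iff_of_nonneg hA).2 fun I => hw I x
  have hG := gradAbsSum_nonneg (fun I => u I t) x
  refine (abs_dLowS_le_gradAbsSum (fun K y => S (fib u t y) (fib w t y) K) I x).trans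
    (gradAbsSum_le _ x fun K i => ?_)
  refine (abs_pd_bilinear_le S (differentiableAt_pi.2 fun I => (hud I).differentiableAt)
    (differentiableAt_pi.2 fun I => (hwd I).differentiableAt) i K).trans ?_
  have hdfw : ‖fderiv ℝ (fib w t) x (EuclideanSpace.single i 1)‖ ≤ B :=
    norm_fderiv_single_le (fun I => (hwd I).differentiableAt) i hB fun I => hdw I i x
  have hdfu : ‖fderiv ℝ (fib u t) x (EuclideanSpace.single i 1)‖ ≤ gradAbsSum (fun I => u I t) x :=
    norm_fderiv_single_le (fun I => (hud I).differentiableAt) i hG fun I =>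
      abs_pd_le_gradAbsSum (fun I => u I t) I i x
  exact mul_le_mul_of_nonneg_left (add_le_add
    (mul_le_mul hfu hdfw (norm_nonneg _) (absSum_nonneg _ x))
    (mul_le_mul hdfu hfw (norm_nonneg _) hG)) (norm_nonneg S)

theorem exists_abs_Bop_le : ∃ a b : ℝ, 0 ≤ b ∧
    ∀ (w u : FormT n q) (t A B : ℝ), 0 ≤ A → 0 ≤ B →
      (∀ I, Differentiable ℝ (w I t)) → (∀ I, Differentiable ℝ (u I t)) →
      (∀ I x, |w I t x| ≤ A) → (∀ I i x, |pd i (w I t) x| ≤ B) →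
      ∀ I x, |Bop M₁ M₂ w u I t x| ≤
        a * A * gradAbsSum (fun I => u I t) x + b * B * absSum (fun I => u I t) x := by
  set C₁ := ‖LinearMap.toContinuous₂ M₁‖
  set C₂ := ‖LinearMap.toContinuous₂ (M₂ + M₂.flip)‖
  set N : ℝ := (Fintype.card (Idx n q) : ℝ)
  set N' : ℝ := (Fintype.card (Idx n (q - 1)) : ℝ)
  refine ⟨C₁ + N' * n * C₂, C₁ * (N * n) + N' * n * C₂, by positivity, ?_⟩
  intro w u t A B hA hB hwd hud hw hdw I x
  have hW := abs_Wop_le M₁ (u := u) hA hw hdw I x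
  have hD := abs_dLowT_sym_le M₂ hA hB hwd hud hw hdw I x
  calc |Bop M₁ M₂ w u I t x| ≤ |Wop M₁ w u I t x| + |dLowT (fun K t' x' =>
        M₂ (fib u t' x') (fib w t' x') K + M₂ (fib w t' x') (fib u t' x') K) I t x| :=
        abs_add_le _ _
    _ ≤ _ := add_le_add hW hD
    _ = _ := by ring

end Bop

section L2

variable {α : Type*} [MeasurableSpace α] {ν : Measure α} {ι κ : Type*} [Fintype ι] [Fintype κ]

lemma mul_mul_le_half_sq_add (k a b : ℝ) {θ : ℝ} (hθ : 0 < θ) :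
    k * a * b ≤ θ / 2 * a ^ 2 + k ^ 2 / (2 * θ) * b ^ 2 := by
  have h : θ / 2 * a ^ 2 + k ^ 2 / (2 * θ) * b ^ 2 - k * a * b = (θ * a - k * b) ^ 2 / (2 * θ) := by
    field_simp
    ring
  nlinarith [div_nonneg (sq_nonneg (θ * a - k * b)) (by positivity : (0 : ℝ) ≤ 2 * θ)]

lemma memLp_sum_abs {f : ι → α → ℝ} (hf : ∀ i, MemLp (f i) 2 ν) :
    MemLp (fun x => ∑ i, |f i x|) 2 ν :=
  memLp_finsetSum Finset.univ fun i _ => (hf i).abs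

lemma integral_sq_sum_abs_le {f : ι → α → ℝ} (hf : ∀ i, MemLp (f i) 2 ν) :
    ∫ x, (∑ i, |f i x|) ^ 2 ∂ν ≤ Fintype.card ι * ∑ i, ∫ x, f i x ^ 2 ∂ν := by
  have hint : ∀ i ∈ Finset.univ, Integrable (fun x => f i x ^ 2) ν := fun i _ => (hf i).integrable_sq
  rw [← integral_finsetSum _ hint, ← integral_const_mul]
  refine integral_mono (memLp_sum_abs hf).integrable_sq
    ((integrable_finsetSum _ hint).const_mul _) fun x => ?_
  simpa only [sq_abs, Finset.card_univ] using
    sq_sum_le_card_mul_sum_sq (s := Finset.univ) (f := fun i => |f i x|)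

theorem abs_sum_integral_mul_le {g v : ι → α → ℝ} {F : κ → α → ℝ} {k m θ : ℝ} (hm : 0 ≤ m)
    (hθ : 0 < θ) (hv : ∀ I, MemLp (v I) 2 ν) (hF : ∀ p, MemLp (F p) 2 ν)
    (hg : ∀ I x, |g I x| ≤ k * ∑ p, |F p x| + m * ∑ I, |v I x|) :
    |∑ I, ∫ x, g I x * v I x ∂ν| ≤ θ / 2 * Fintype.card κ * ∑ p, ∫ x, F p x ^ 2 ∂ν +
      (k ^ 2 / (2 * θ) + m) * Fintype.card ι * ∑ I, ∫ x, v I x ^ 2 ∂ν := by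
  set G := fun x => ∑ p, |F p x|
  set U := fun x => ∑ I, |v I x|
  have hG : MemLp G 2 ν := memLp_sum_abs hF
  have hU : MemLp U 2 ν := memLp_sum_abs hv
  have hkmU : MemLp (fun x => k * G x + m * U x) 2 ν := (hG.const_mul k).add (hU.const_mul m)
  have hint : ∀ I ∈ Finset.univ, Integrable (fun x => (k * G x + m * U x) * |v I x|) ν :=
    fun I _ => hkmU.integrable_mul (hv I).abs
  have hpair : ∀ I, |∫ x, g I x * v I x ∂ν| ≤ ∫ x, (k * G x + m * U x) * |v I x| ∂ν := fun I =>
    abs_integral_le_integral_abs.trans <| integral_mono_of_nonneg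
      (ae_of_all _ fun x => abs_nonneg _) (hint I (Finset.mem_univ I)) (ae_of_all _ fun x => by
        simp only [abs_mul]; exact mul_le_mul_of_nonneg_right (hg I x) (abs_nonneg _))
  calc |∑ I, ∫ x, g I x * v I x ∂ν|
      ≤ ∑ I, ∫ x, (k * G x + m * U x) * |v I x| ∂ν :=
        (Finset.abs_sum_le_sum_abs _ _).trans (Finset.sum_le_sum fun I _ => hpair I)
    _ = ∫ x, (k * G x + m * U x) * U x ∂ν := by
        rw [← integral_finsetSum _ hint]
        simp only [← Finset.mul_sum]
        rfl
    _ ≤ ∫ x, (θ / 2 * G x ^ 2 + (k ^ 2 / (2 * θ) + m) * U x ^ 2) ∂ν := by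
        refine integral_mono (hkmU.integrable_mul hU)
          ((hG.integrable_sq.const_mul _).add (hU.integrable_sq.const_mul _)) fun x => ?_
        have := mul_mul_le_half_sq_add k (G x) (U x) hθ
        simp only
        nlinarith
    _ = θ / 2 * ∫ x, G x ^ 2 ∂ν + (k ^ 2 / (2 * θ) + m) * ∫ x, U x ^ 2 ∂ν := by
        rw [integral_add (hG.integrable_sq.const_mul _) (hU.integrable_sq.const_mul _),
          integral_const_mul, integral_const_mul]
    _ ≤ _ := by
        rw [mul_assoc, mul_assoc (_ + m)]
        gcongr
        exacts [integral_sq_sum_abs_le hF, integral_sq_sum_abs_le hv]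

end L2

lemma energy_coefficients_le {μ d N a b A B G L : ℝ} (hμ : 0 < μ) (hd : 0 ≤ d) (hN : 0 ≤ N)
    (hB : 0 ≤ B) (hG : 0 ≤ G) (hL : 0 ≤ L) :
    μ / (d + 1) / 2 * d * G + ((a * A) ^ 2 / (2 * (μ / (d + 1))) + b * B) * N * L ≤
      μ / 2 * G + (2 * (a ^ 2 * (d + 1) * N + 1) ^ 2 / μ * A ^ 2 + (b * N + 1) * B) * L := by
  set c := a ^ 2 * (d + 1) * N
  have hc : 0 ≤ c := by positivity
  gcongr ?_ * _ + ?_ * _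
  · rw [div_div, div_mul_eq_mul_div, div_le_div_iff₀ (by positivity) two_pos]
    nlinarith
  · have hsq : (a * A) ^ 2 / (2 * (μ / (d + 1))) * N = c / 2 / μ * A ^ 2 := by
      field_simp
      ring
    rw [add_mul, hsq, mul_right_comm, add_mul _ 1, one_mul]
    gcongr
    · nlinarith
    · linarith

end

theorem stmt10_general (n q : ℕ) (δ μ T : ℝ)
    (hδ : (n : ℝ) / 2 < δ) (hμ : 0 < μ)
    (M₁ : M1Type n q) (M₂ : M2Type n q) :
    ∃ c₁ c₂ : ℝ, 0 < c₁ ∧ 0 < c₂ ∧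
      ∀ w u : FormT n q,
        (∀ I, ∀ t ∈ Set.Icc (0 : ℝ) T, ContDiff ℝ 1 (fun y => w I t y)) →
        eSupT T δ w ≠ ⊤ → eSupGradT T (δ + 1) w ≠ ⊤ →
        (∀ I, ∀ t ∈ Set.Icc (0 : ℝ) T, ContDiff ℝ 1 (fun y => u I t y)) →
        (∀ I, ∀ t ∈ Set.Icc (0 : ℝ) T, MemLp (fun x => u I t x) 2 volume) →
        (∀ I, ∀ i : Fin n, ∀ t ∈ Set.Icc (0 : ℝ) T,
          MemLp (fun x => pd i (fun y => u I t y) x) 2 volume) →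
        (∀ I, ∀ t ∈ Set.Icc (0 : ℝ) T,
          Integrable (fun x => Bop M₁ M₂ w u I t x * u I t x) volume) →
        ∀ t ∈ Set.Icc (0 : ℝ) T,
          |∑ I : Idx n q, ∫ x : Spc n, Bop M₁ M₂ w u I t x * u I t x| ≤
            μ / 2 * gradSq u t +
              (2 * c₂ ^ 2 / μ * ((eSupT T δ w).toReal) ^ 2 +
                  c₁ * (eSupGradT T (δ + 1) w).toReal) * l2Sq u t := by
  obtain ⟨a, b, hb, hBop⟩ := exists_abs_Bop_le M₁ M₂
  set N : ℝ := (Fintype.card (Idx n q) : ℝ)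
  set d : ℝ := (Fintype.card (Idx n q × Fin n) : ℝ)
  -- Young's weight is `μ / (d + 1)`; the `+ 1`s keep everything positive when `d = 0` or `N = 0`
  refine ⟨b * N + 1, a ^ 2 * (d + 1) * N + 1, by positivity, by positivity, ?_⟩
  intro w u hw hwS hwG hu huL2 hpdL2 _ t ht
  set A := (eSupT T δ w).toReal
  set B := (eSupGradT T (δ + 1) w).toReal
  have hδ0 : 0 ≤ δ := (by positivity : (0 : ℝ) ≤ n / 2).trans hδ.le
  have hpt := hBop w u t A B ENNReal.toReal_nonneg ENNReal.toReal_nonneg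
    (fun I => (hw I t ht).differentiable one_ne_zero)
    (fun I => (hu I t ht).differentiable one_ne_zero)
    (fun I x => abs_le_toReal_eSupT hδ0 hwS I ht x)
    (fun I i x => abs_pd_le_toReal_eSupGradT (by linarith) hwG I i ht x)
  have key := abs_sum_integral_mul_le (ν := volume)
    (F := fun p : Idx n q × Fin n => fun x => pd p.2 (fun y => u p.1 t y) x)
    (mul_nonneg hb ENNReal.toReal_nonneg) (by positivity : 0 < μ / (d + 1))
    (fun I => huL2 I t ht) (fun p => hpdL2 p.1 p.2 t ht)
    (fun I x => by rw [Fintype.sum_prod_type]; exact hpt I x)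
  rw [Fintype.sum_prod_type] at key
  exact key.trans (energy_coefficients_le (G := gradSq u t) (L := l2Sq u t) hμ (by positivity)
    (by positivity) ENNReal.toReal_nonneg (by unfold gradSq; positivity)
    (by unfold l2Sq; positivity))

/-- the energy estimate for the pairing `(B_q(w,u)(·,t), u(·,t))_{L²}`. -/
theorem stmt10 (n q : ℕ) (hn : 2 ≤ n) (hq : q ≤ n) (δ μ T : ℝ)
    (hδ : (n : ℝ) / 2 < δ) (hμ : 0 < μ) (hT : 0 < T)
    (M₁ : M1Type n q) (M₂ : M2Type n q) :
    ∃ c₁ c₂ : ℝ, 0 < c₁ ∧ 0 < c₂ ∧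
      ∀ w u : FormT n q,
        (∀ I, ∀ t ∈ Set.Icc (0 : ℝ) T, ContDiff ℝ 1 (fun y => w I t y)) →
        eSupT T δ w ≠ ⊤ → eSupGradT T (δ + 1) w ≠ ⊤ →
        (∀ I, ∀ t ∈ Set.Icc (0 : ℝ) T, ContDiff ℝ 1 (fun y => u I t y)) →
        (∀ I, ∀ t ∈ Set.Icc (0 : ℝ) T, MemLp (fun x => u I t x) 2 volume) →
        (∀ I, ∀ i : Fin n, ∀ t ∈ Set.Icc (0 : ℝ) T,
          MemLp (fun x => pd i (fun y => u I t y) x) 2 volume) →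
        (∀ I, ∀ t ∈ Set.Icc (0 : ℝ) T,
          Integrable (fun x => Bop M₁ M₂ w u I t x * u I t x) volume) →
        ∀ t ∈ Set.Icc (0 : ℝ) T,
          |∑ I : Idx n q, ∫ x : Spc n, Bop M₁ M₂ w u I t x * u I t x| ≤
            μ / 2 * gradSq u t +
              (2 * c₂ ^ 2 / μ * ((eSupT T δ w).toReal) ^ 2 +
                  c₁ * (eSupGradT T (δ + 1) w).toReal) * l2Sq u t :=
  stmt10_general n q δ μ T hδ hμ M₁ M₂

end NSdeRham

end
end
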